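/- arXiv:1403.0268 — 9 statements merged into one kernel-verified Lean document; each statement's English description precedes it below -/
import Mathlib

section
/- Let p ∈ (ℝ∪{−∞})ⁿ be a nonzero vector (at least one entry is real), q ∈ ℝⁿ a regular vector, and set Δ = max_{1≤i≤n}(p_i − q_i) (a real number). A regular vector x ∈ ℝⁿ satisfies f(x) = Δ if and only if there exists α ∈ ℝ such that for every i: p_i + α ≤ x_i ≤ α + Δ + q_i. -/
/-!
Write `f(x) = a + b` with `a = max_i (x_i − q_i)` and `b = max_j (p_j − x_j)`. Since
`p_i − q_i = (p_i − x_i) + (x_i − q_i) ≤ b + a`, always `Δ ≤ f(x)`, so `f(x) = Δ` means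
`a + b ≤ Δ`. Splitting such a sum bound as `b ≤ −α`, `a ≤ α + Δ` (take `α = −b`) and unfolding the
two maxima gives exactly the constraints `p_i + α ≤ x_i ≤ α + Δ + q_i`.
-/

/-- The objective function f(x) = (max_i (x_i − q_i)) + (max_j (p_j − x_j)). -/
noncomputable def obj {n : ℕ} (p : Fin n → WithBot ℝ) (q : Fin n → ℝ)
    (x : Fin n → ℝ) : WithBot ℝ :=
  (Finset.univ.sup fun i => ((x i - q i : ℝ) : WithBot ℝ)) +
    (Finset.univ.sup fun j => p j + ((-(x j) : ℝ) : WithBot ℝ))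

open Finset

namespace WithBot

variable {G : Type*} [AddCommGroup G] [LinearOrder G] [IsOrderedAddMonoid G]

theorem add_coe_le_coe_iff_le_sub (a : WithBot G) (b c : G) :
    a + b ≤ c ↔ a ≤ ↑(c - b) := by
  cases a <;> simp [← coe_add, le_sub_iff_add_le]

theorem add_le_coe_iff_exists (a b : WithBot G) (c : G) :
    a + b ≤ c ↔ ∃ g : G, a ≤ ↑(g + c) ∧ b ≤ ↑(-g) := by
  constructor
  · intro h
    cases b with
    | bot =>
      cases a with
      | bot => exact ⟨0, bot_le, bot_le⟩
      | coe a => exact ⟨a - c, by simp, bot_le⟩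
    | coe b => exact ⟨-b, by simpa [add_coe_le_coe_iff_le_sub, neg_add_eq_sub] using h, by simp⟩
  · rintro ⟨g, ha, hb⟩
    calc a + b ≤ ↑(g + c) + ↑(-g) := add_le_add ha hb
      _ = c := by rw [← coe_add]; congr 1; abel

end WithBot

theorem sup_add_neg_le_obj {n : ℕ} (p : Fin n → WithBot ℝ) (q x : Fin n → ℝ) :
    (univ.sup fun i => p i + ((-(q i) : ℝ) : WithBot ℝ)) ≤ obj p q x := by
  refine Finset.sup_le fun i _ => ?_
  calc p i + ((-(q i) : ℝ) : WithBot ℝ)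
      = (p i + ((-(x i) : ℝ) : WithBot ℝ)) + ((x i - q i : ℝ) : WithBot ℝ) := by
        rw [add_assoc, ← WithBot.coe_add]; congr 2; ring
    _ ≤ _ := by
        rw [obj, add_comm (univ.sup _)]
        exact add_le_add (le_sup (f := fun j => p j + ((-(x j) : ℝ) : WithBot ℝ)) (mem_univ i))
          (le_sup (f := fun j => ((x j - q j : ℝ) : WithBot ℝ)) (mem_univ i))

theorem obj_le_coe_iff {n : ℕ} (p : Fin n → WithBot ℝ) (q x : Fin n → ℝ) (c : ℝ) :
    obj p q x ≤ c ↔ ∃ α : ℝ, ∀ i,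
      p i + ((α : ℝ) : WithBot ℝ) ≤ ((x i : ℝ) : WithBot ℝ) ∧ x i ≤ α + c + q i := by
  rw [obj, WithBot.add_le_coe_iff_exists]
  refine exists_congr fun α => ?_
  simp only [Finset.sup_le_iff, mem_univ, true_implies, WithBot.coe_le_coe,
    WithBot.add_coe_le_coe_iff_le_sub, sub_le_iff_le_add, sub_neg_eq_add, neg_add_eq_sub,
    forall_and]
  exact and_comm

theorem stmt_1_general {n : ℕ} (p : Fin n → WithBot ℝ) (q : Fin n → ℝ)
    (Δ : ℝ)
    (hΔ : (Δ : WithBot ℝ) = Finset.univ.sup fun i => p i + ((-(q i) : ℝ) : WithBot ℝ))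
    (x : Fin n → ℝ) :
    obj p q x = (Δ : WithBot ℝ) ↔
      ∃ α : ℝ, ∀ i,
        p i + ((α : ℝ) : WithBot ℝ) ≤ ((x i : ℝ) : WithBot ℝ) ∧
        x i ≤ α + Δ + q i := by
  rw [← obj_le_coe_iff]
  exact ⟨le_of_eq, fun h => h.antisymm (hΔ ▸ sup_add_neg_le_obj p q x)⟩

/-- A regular vector x attains the minimum value Δ = max_i (p_i − q_i) of f iff
there is α ∈ ℝ with p_i + α ≤ x_i ≤ α + Δ + q_i for all i. -/
theorem stmt_1 {n : ℕ} (p : Fin n → WithBot ℝ) (q : Fin n → ℝ)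
    (hp : ∃ i, p i ≠ ⊥) (Δ : ℝ)
    (hΔ : (Δ : WithBot ℝ) = Finset.univ.sup fun i => p i + ((-(q i) : ℝ) : WithBot ℝ))
    (x : Fin n → ℝ) :
    obj p q x = (Δ : WithBot ℝ) ↔
      ∃ α : ℝ, ∀ i,
        p i + ((α : ℝ) : WithBot ℝ) ≤ ((x i : ℝ) : WithBot ℝ) ∧
        x i ≤ α + Δ + q i :=
  stmt_1_general p q Δ hΔ x
end

section
/- Let p ∈ (ℝ∪{−∞})ⁿ be a nonzero vector (at least one entry is real), q ∈ ℝⁿ a regular vector, and Δ = max_{1≤i≤n}(p_i − q_i) (a real number). Then for a regular vector x ∈ ℝⁿ the following two conditions are equivalent: (1) there exists α ∈ ℝ with p_i + α ≤ x_i ≤ α + Δ + q_i for all i; (2) there exists u ∈ ℝⁿ with x_i = max( u_i , p_i − Δ + max_{1≤j≤n}(u_j − q_j) ) for all i. -/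
/-!
With `M = maxⱼ (uⱼ - qⱼ)` the Kleene-star form reads `x = u ⊕ (M - Δ) p`, so `α = M - Δ` gives
`αp ≤ x`, and `x ≤ αΔq` because `u ≤ M q` and `p ≤ Δ q` by the definition of `Δ`. Conversely, a
solution `x` of the double inequality is its own `u`: there `maxⱼ (xⱼ - qⱼ) ≤ α + Δ`, so the
second term of the maximum is at most `αp ≤ x`.
-/

open Finset

namespace WithBot

lemma add_coe_add_coe {α : Type*} [AddSemigroup α] (a : WithBot α) (b c : α) :
    a + b + c = a + ↑(b + c) := by
  rw [add_assoc, coe_add]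

lemma add_coe_le_coe_iff {α : Type*} [AddCommGroup α] [LinearOrder α] [IsOrderedAddMonoid α]
    (a : WithBot α) (b c : α) : a + b ≤ c ↔ a ≤ ↑(c - b) :=
  calc a + b ≤ c ↔ a + b ≤ ↑(c - b) + b := by rw [← coe_add, sub_add_cancel]
    _ ↔ a ≤ ↑(c - b) := WithBot.add_le_add_iff_right coe_ne_bot

end WithBot

section MaxPlus

variable {ι : Type*} [Fintype ι] (p : ι → WithBot ℝ) (q : ι → ℝ) (Δ : ℝ)

lemma le_coe_add_of_coe_eq_sup
    (hΔ : (Δ : WithBot ℝ) = univ.sup fun i => p i + ((-(q i) : ℝ) : WithBot ℝ)) (i : ι) :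
    p i ≤ ↑(Δ + q i) := by
  have h : p i + ((-(q i) : ℝ) : WithBot ℝ) ≤ Δ :=
    hΔ ▸ le_sup (f := fun i => p i + ((-(q i) : ℝ) : WithBot ℝ)) (mem_univ i)
  rwa [WithBot.add_coe_le_coe_iff, sub_neg_eq_add] at h

lemma kleene_form_self_of_double_ineq {x : ι → ℝ} {α : ℝ}
    (hα : ∀ i, p i + (α : WithBot ℝ) ≤ x i ∧ x i ≤ α + Δ + q i) (i : ι) :
    ((x i : ℝ) : WithBot ℝ) = ((x i : ℝ) : WithBot ℝ) ⊔
      (p i + ((-Δ : ℝ) : WithBot ℝ) + univ.sup fun j => ((x j - q j : ℝ) : WithBot ℝ)) := by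
  have hsup : (univ.sup fun j => ((x j - q j : ℝ) : WithBot ℝ)) ≤ ↑(α + Δ) :=
    Finset.sup_le fun j _ => WithBot.coe_le_coe.mpr (by linarith [(hα j).2])
  refine (sup_eq_left.mpr ?_).symm
  calc p i + ((-Δ : ℝ) : WithBot ℝ) + univ.sup (fun j => ((x j - q j : ℝ) : WithBot ℝ))
      ≤ p i + ((-Δ : ℝ) : WithBot ℝ) + ↑(α + Δ) := by gcongr
    _ = p i + α := by rw [WithBot.add_coe_add_coe, add_comm α, neg_add_cancel_left]
    _ ≤ x i := (hα i).1

lemma double_ineq_of_kleene_form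
    (hΔ : (Δ : WithBot ℝ) = univ.sup fun i => p i + ((-(q i) : ℝ) : WithBot ℝ)) {x u : ι → ℝ}
    (hu : ∀ i, ((x i : ℝ) : WithBot ℝ) = ((u i : ℝ) : WithBot ℝ) ⊔
      (p i + ((-Δ : ℝ) : WithBot ℝ) + univ.sup fun j => ((u j - q j : ℝ) : WithBot ℝ))) :
    ∃ α : ℝ, ∀ i, p i + (α : WithBot ℝ) ≤ x i ∧ x i ≤ α + Δ + q i := by
  cases isEmpty_or_nonempty ι
  · exact ⟨0, isEmptyElim⟩
  set M := univ.sup' univ_nonempty fun j => u j - q j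
  have hM : (univ.sup fun j => ((u j - q j : ℝ) : WithBot ℝ)) = M :=
    (coe_sup' univ_nonempty _).symm
  have hu' : ∀ i, ((x i : ℝ) : WithBot ℝ) = ((u i : ℝ) : WithBot ℝ) ⊔ (p i + ↑(M - Δ)) := by
    intro i
    rw [hu i, hM, WithBot.add_coe_add_coe, neg_add_eq_sub]
  refine ⟨M - Δ, fun i => ⟨(hu' i).symm ▸ le_sup_right, ?_⟩⟩
  have hx : ((x i : ℝ) : WithBot ℝ) ≤ ↑(M + q i) := by
    rw [hu' i]
    refine sup_le (WithBot.coe_le_coe.mpr ?_) ?_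
    · linarith [le_sup' (fun j => u j - q j) (mem_univ i)]
    · rw [WithBot.add_coe_le_coe_iff]
      convert le_coe_add_of_coe_eq_sup p q Δ hΔ i using 2
      ring
  linarith [WithBot.coe_le_coe.mp hx]

end MaxPlus

theorem stmt_3_general {n : ℕ} (p : Fin n → WithBot ℝ) (q : Fin n → ℝ)
    (Δ : ℝ)
    (hΔ : (Δ : WithBot ℝ) = Finset.univ.sup fun i => p i + ((-(q i) : ℝ) : WithBot ℝ))
    (x : Fin n → ℝ) :
    (∃ α : ℝ, ∀ i,
        p i + ((α : ℝ) : WithBot ℝ) ≤ ((x i : ℝ) : WithBot ℝ) ∧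
        x i ≤ α + Δ + q i) ↔
      (∃ u : Fin n → ℝ, ∀ i,
        ((x i : ℝ) : WithBot ℝ) =
          ((u i : ℝ) : WithBot ℝ) ⊔
            (p i + ((-Δ : ℝ) : WithBot ℝ) +
              Finset.univ.sup fun j => ((u j - q j : ℝ) : WithBot ℝ))) :=
  ⟨fun ⟨_, hα⟩ => ⟨x, kleene_form_self_of_double_ineq p q Δ hα⟩,
    fun ⟨_, hu⟩ => double_ineq_of_kleene_form p q Δ hΔ hu⟩

theorem stmt_3 {n : ℕ} (p : Fin n → WithBot ℝ) (q : Fin n → ℝ)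
    (hp : ∃ i, p i ≠ ⊥) (Δ : ℝ)
    (hΔ : (Δ : WithBot ℝ) = Finset.univ.sup fun i => p i + ((-(q i) : ℝ) : WithBot ℝ))
    (x : Fin n → ℝ) :
    (∃ α : ℝ, ∀ i,
        p i + ((α : ℝ) : WithBot ℝ) ≤ ((x i : ℝ) : WithBot ℝ) ∧
        x i ≤ α + Δ + q i) ↔
      (∃ u : Fin n → ℝ, ∀ i,
        ((x i : ℝ) : WithBot ℝ) =
          ((u i : ℝ) : WithBot ℝ) ⊔
            (p i + ((-Δ : ℝ) : WithBot ℝ) +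
              Finset.univ.sup fun j => ((u j - q j : ℝ) : WithBot ℝ))) :=
  stmt_3_general p q Δ hΔ x
end

section
/- Let p ∈ (ℝ∪{−∞})ⁿ be nonzero (some entry real), q ∈ ℝⁿ regular, h ∈ ℝⁿ regular, and g ∈ (ℝ∪{−∞})ⁿ with g_i ≤ h_i for all i. Then the minimum over all regular x ∈ ℝⁿ satisfying g_i ≤ x_i ≤ h_i for all i of f(x) = (max_{1≤i≤n}(x_i − q_i)) + (max_{1≤j≤n}(p_j − x_j)) equals θ = max( max_{1≤i≤n}(p_i − q_i) , (max_{1≤i≤n}(g_i − q_i)) + (max_{1≤j≤n}(p_j − h_j)) ), and this minimum is attained by some feasible x. -/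
open Finset

lemma WithBot.add_coe_le_coe_iff_s4 {α : Type*} [AddCommGroup α] [LinearOrder α]
    [IsOrderedAddMonoid α] {a : WithBot α} {r s : α} : a + r ≤ s ↔ a ≤ ↑(s - r) := by
  induction a using WithBot.recBotCoe with
  | bot => simp
  | coe a => norm_cast; exact le_sub_iff_add_le.symm

section maxSub

variable {ι : Type*} [Fintype ι]

/-- The max-plus product `b⁻ ⊗ a` of the paper. -/
noncomputable def maxSub (a : ι → WithBot ℝ) (b : ι → ℝ) : WithBot ℝ :=
  univ.sup fun i => a i + ↑(-b i)

lemma add_neg_le_maxSub (a : ι → WithBot ℝ) (b : ι → ℝ) (i : ι) : a i + ↑(-b i) ≤ maxSub a b :=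
  le_sup (f := fun i => a i + ↑(-b i)) (mem_univ i)

lemma maxSub_le_coe_iff {a : ι → WithBot ℝ} {b : ι → ℝ} {c : ℝ} :
    maxSub a b ≤ c ↔ ∀ i, a i ≤ ↑(b i + c) := by
  simp only [maxSub, Finset.sup_le_iff, mem_univ, true_implies, WithBot.add_coe_le_coe_iff_s4,
    sub_neg_eq_add, add_comm c]

lemma maxSub_ne_bot {a : ι → WithBot ℝ} (b : ι → ℝ) {i : ι} (hi : a i ≠ ⊥) : maxSub a b ≠ ⊥ :=
  ne_bot_of_le_ne_bot (WithBot.add_ne_bot.mpr ⟨hi, WithBot.coe_ne_bot⟩) (add_neg_le_maxSub a b i)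

lemma maxSub_mono {a a' : ι → WithBot ℝ} {b b' : ι → ℝ} (ha : a ≤ a') (hb : b' ≤ b) :
    maxSub a b ≤ maxSub a' b' :=
  sup_mono_fun fun i _ => add_le_add (ha i) (WithBot.coe_le_coe.mpr (neg_le_neg (hb i)))

lemma maxSub_le_maxSub_add_maxSub (a : ι → WithBot ℝ) (x c : ι → ℝ) :
    maxSub a c ≤ maxSub (fun i => ↑(x i)) c + maxSub a x := by
  refine Finset.sup_le fun i _ => ?_
  calc a i + ↑(-c i) = ↑(x i) + ↑(-c i) + (a i + ↑(-x i)) := by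
        induction a i using WithBot.recBotCoe with
        | bot => simp
        | coe v => norm_cast; ring
    _ ≤ _ :=
      add_le_add (add_neg_le_maxSub (fun i => (x i : WithBot ℝ)) c i) (add_neg_le_maxSub a x i)

end maxSub

variable {n : ℕ} {p g : Fin n → WithBot ℝ} {q h : Fin n → ℝ}

lemma obj_eq_maxSub_add_maxSub (p : Fin n → WithBot ℝ) (q x : Fin n → ℝ) :
    obj p q x = maxSub (fun i => ↑(x i)) q + maxSub p x := by
  simp only [obj, maxSub, sub_eq_add_neg, WithBot.coe_add]

lemma maxSub_sup_le_obj {y : Fin n → ℝ} (hy : ∀ i, g i ≤ y i ∧ y i ≤ h i) :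
    maxSub p q ⊔ (maxSub g q + maxSub p h) ≤ obj p q y := by
  rw [obj_eq_maxSub_add_maxSub]
  refine sup_le (maxSub_le_maxSub_add_maxSub p y q) (add_le_add ?_ ?_)
  · exact maxSub_mono (fun i => (hy i).1) le_rfl
  · exact maxSub_mono le_rfl (fun i => (hy i).2)

lemma exists_feasible_obj_le {t c : ℝ} (hgh : ∀ i, g i ≤ h i) (hgq : maxSub g q ≤ t)
    (hph : maxSub p h ≤ c) (hpq : maxSub p q ≤ ↑(t + c)) :
    ∃ x : Fin n → ℝ, (∀ i, g i ≤ x i ∧ x i ≤ h i) ∧ obj p q x ≤ ↑(t + c) := by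
  rw [maxSub_le_coe_iff] at hgq hph hpq
  refine ⟨fun i => min (h i) (q i + t), fun i => ⟨?_, min_le_left _ _⟩, ?_⟩
  · rw [WithBot.coe_min]
    exact le_min (hgh i) (hgq i)
  · rw [obj_eq_maxSub_add_maxSub, WithBot.coe_add]
    refine add_le_add (maxSub_le_coe_iff.mpr fun i => ?_) (maxSub_le_coe_iff.mpr fun i => ?_)
    · exact WithBot.coe_le_coe.mpr (by linarith [min_le_right (h i) (q i + t)])
    · rw [← min_add_add_right, WithBot.coe_min, add_assoc]
      exact le_min (hph i) (hpq i)

/-- Boundary-constrained problem: the minimum of f over regular x with g ≤ x ≤ h equals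
θ = max( max_i (p_i − q_i), (max_i (g_i − q_i)) + (max_j (p_j − h_j)) ), a real number,
and it is attained by some feasible x. -/
theorem stmt_4 {n : ℕ} (p : Fin n → WithBot ℝ) (q : Fin n → ℝ)
    (g : Fin n → WithBot ℝ) (h : Fin n → ℝ)
    (hp : ∃ i, p i ≠ ⊥) (hgh : ∀ i, g i ≤ ((h i : ℝ) : WithBot ℝ)) :
    ∃ θ : ℝ,
      ((θ : WithBot ℝ) =
        (Finset.univ.sup fun i => p i + ((-(q i) : ℝ) : WithBot ℝ)) ⊔
          ((Finset.univ.sup fun i => g i + ((-(q i) : ℝ) : WithBot ℝ)) +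
            (Finset.univ.sup fun j => p j + ((-(h j) : ℝ) : WithBot ℝ)))) ∧
      IsLeast
        {v | ∃ x : Fin n → ℝ,
          (∀ i, g i ≤ ((x i : ℝ) : WithBot ℝ) ∧ x i ≤ h i) ∧ obj p q x = v}
        (θ : WithBot ℝ) := by
  obtain ⟨i, hi⟩ := hp
  obtain ⟨c, hc⟩ := WithBot.ne_bot_iff_exists.mp (maxSub_ne_bot h hi)
  obtain ⟨θ, hθ⟩ := WithBot.ne_bot_iff_exists.mp
    (ne_bot_of_le_ne_bot (maxSub_ne_bot q hi) (le_sup_left (b := maxSub g q + maxSub p h)))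
  have hsup : maxSub p q ⊔ (maxSub g q + ↑c) = θ := hc ▸ hθ.symm
  have hlower : ∀ y : Fin n → ℝ, (∀ i, g i ≤ y i ∧ y i ≤ h i) → (θ : WithBot ℝ) ≤ obj p q y :=
    fun y hy => hθ.symm ▸ maxSub_sup_le_obj hy
  obtain ⟨x, hx, hxθ⟩ := exists_feasible_obj_le (t := θ - c) hgh
    (WithBot.add_coe_le_coe_iff_s4.mp (hsup ▸ le_sup_right)) hc.ge
    (by rw [sub_add_cancel, ← hsup]; exact le_sup_left)
  rw [sub_add_cancel] at hxθ
  exact ⟨θ, hθ, ⟨x, hx, le_antisymm hxθ (hlower x hx)⟩, fun v ⟨y, hy, hv⟩ => hv ▸ hlower y hy⟩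
end

section
/- Let p ∈ (ℝ∪{−∞})ⁿ be nonzero, q ∈ ℝⁿ regular, g ∈ (ℝ∪{−∞})ⁿ, and let B be an n×n matrix over ℝ∪{−∞} with Tr(B) ≤ 0 (every cyclic sequence of length m ≤ n has total weight ≤ 0). Then the minimum over all regular x ∈ ℝⁿ satisfying, for every i, max( max_{1≤j≤n}(B_{ij} + x_j) , g_i ) ≤ x_i, of f(x) = (max_{1≤i≤n}(x_i − q_i)) + (max_{1≤j≤n}(p_j − x_j)) equals θ = max_{1≤i,j≤n}( −q_i + (B*)_{ij} + p_j ), and this minimum is attained by some feasible regular x. -/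
/-!
ℝ ∪ {−∞} is `WithBot ℝ`, with `⊔` as max-plus addition; `hB` is the condition Tr(B) ≤ 0,
i.e. every cycle of length at most `n` has nonpositive weight.

Feasibility of `x` for `Bx ≤ x` means `B i j ≤ x i - x j`; telescoping along paths gives
`B* i j ≤ x i - x j`, so every term `-q i + B* i j + p j` of `θ` is at most `f x`.
Conversely, removing cycles shows `B^m ≤ B*` for all `m`, hence `B ⊗ B* ≤ B*`, so every
`x = B* ⊗ u` satisfies `Bx ≤ x` and `x ≥ u`. For `u = (μ + p) ⊕ c` with `c ≥ g` this `x` is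
regular and `g ≤ x`, and `p j - x j ≤ -μ`; once `μ` is large, also `x i - q i ≤ θ + μ`,
so `f x ≤ θ`.
-/

noncomputable def mmul {n : ℕ} (A B : Fin n → Fin n → WithBot ℝ) :
    Fin n → Fin n → WithBot ℝ :=
  fun i j => Finset.univ.sup fun k => A i k + B k j

noncomputable def mpow {n : ℕ} (A : Fin n → Fin n → WithBot ℝ) :
    ℕ → Fin n → Fin n → WithBot ℝ
  | 0 => fun i j => if i = j then (0 : WithBot ℝ) else ⊥
  | m + 1 => mmul (mpow A m) A

noncomputable def mstar {n : ℕ} (A : Fin n → Fin n → WithBot ℝ) :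
    Fin n → Fin n → WithBot ℝ :=
  fun i j => (Finset.range n).sup fun m => mpow A m i j

open Finset

namespace WithBot

lemma add_coe_le_coe_iff_s6 {a : WithBot ℝ} {r s : ℝ} : a + r ≤ s ↔ a ≤ ↑(s - r) := by
  cases a with
  | bot => simp
  | coe a => norm_cast; constructor <;> intro h <;> linarith

lemma add_finset_sup {ι : Type*} (c : WithBot ℝ) (s : Finset ι) (f : ι → WithBot ℝ) :
    c + s.sup f = s.sup fun i => c + f i :=
  apply_sup_eq_sup_comp (c + ·) (fun _ _ => add_max c _ _) (add_bot c)

lemma exists_forall_le_coe {ι : Type*} [Finite ι] (a : ι → WithBot ℝ) :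
    ∃ c : ℝ, ∀ i, a i ≤ c := by
  obtain ⟨M, hM⟩ := Finite.exists_le a
  exact ⟨M.unbotD 0, fun i => (hM i).trans (le_coe_unbotD M 0)⟩

end WithBot

section MaxPlus

variable {n : ℕ} (B : Fin n → Fin n → WithBot ℝ)

lemma mpow_succ_apply (m : ℕ) (i j : Fin n) :
    mpow B (m + 1) i j = univ.sup fun k => mpow B m i k + B k j := rfl

lemma mpow_zero_apply (i j : Fin n) : mpow B 0 i j = if i = j then 0 else ⊥ := rfl

lemma mpow_one_apply (i j : Fin n) : mpow B 1 i j = B i j := by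
  rw [mpow_succ_apply]
  refine le_antisymm (Finset.sup_le fun k _ => ?_)
    (le_sup_of_le (mem_univ i) (by simp [mpow_zero_apply]))
  by_cases h : i = k <;> simp [mpow_zero_apply, h]

lemma mpow_add_apply_le (m₁ m₂ : ℕ) (i k j : Fin n) :
    mpow B m₁ i k + mpow B m₂ k j ≤ mpow B (m₁ + m₂) i j := by
  induction m₂ generalizing j with
  | zero => by_cases h : k = j <;> simp [mpow_zero_apply, h]
  | succ m ih =>
    rw [mpow_succ_apply, WithBot.add_finset_sup, ← Nat.add_assoc, mpow_succ_apply]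
    refine Finset.sup_le fun l hl => ?_
    rw [← add_assoc]
    exact (add_le_add_left (ih l) _).trans
      (le_sup (f := fun l => mpow B (m₁ + m) i l + B l j) hl)

def pathWeight (v : ℕ → Fin n) (m : ℕ) : WithBot ℝ :=
  ∑ t ∈ range m, B (v t) (v (t + 1))

lemma pathWeight_add (v : ℕ → Fin n) (a c : ℕ) :
    pathWeight B v (a + c) = pathWeight B v a + pathWeight B (fun t => v (a + t)) c := by
  simp only [pathWeight, sum_range_add, add_assoc]

lemma pathWeight_le_mpow (v : ℕ → Fin n) (m : ℕ) :
    pathWeight B v m ≤ mpow B m (v 0) (v m) := by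
  induction m with
  | zero => simp [pathWeight, mpow_zero_apply]
  | succ m ih =>
    rw [pathWeight, sum_range_succ, mpow_succ_apply]
    exact (add_le_add_left ih _).trans
      (le_sup (f := fun k => mpow B m (v 0) k + B k (v (m + 1))) (mem_univ (v m)))

lemma exists_mpow_le_pathWeight {m : ℕ} {i j : Fin n} (h : mpow B m i j ≠ ⊥) :
    ∃ v : ℕ → Fin n, v 0 = i ∧ v m = j ∧ mpow B m i j ≤ pathWeight B v m := by
  induction m generalizing j with
  | zero =>
    obtain rfl : i = j := by by_contra hij; simp [mpow_zero_apply, hij] at h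
    exact ⟨fun _ => i, rfl, rfl, by simp [pathWeight, mpow_zero_apply]⟩
  | succ m ih =>
    obtain ⟨k, -, hk⟩ :=
      exists_mem_eq_sup univ ⟨i, mem_univ i⟩ fun k => mpow B m i k + B k j
    rw [mpow_succ_apply, hk] at h ⊢
    obtain ⟨v, hv0, hvm, hv⟩ := ih (WithBot.add_ne_bot.1 h).1
    refine ⟨Function.update v (m + 1) j, by simp [hv0], by simp, ?_⟩
    have hagree : ∀ t ∈ range (m + 1), Function.update v (m + 1) j t = v t := fun t ht =>
      Function.update_of_ne (by simp at ht; omega) _ _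
    have hsum : pathWeight B (Function.update v (m + 1) j) m = pathWeight B v m :=
      sum_congr rfl fun t ht => by
        rw [hagree t (mem_range.2 (by simp at ht; omega)), hagree (t + 1) (by simpa using ht)]
    rw [pathWeight, sum_range_succ, ← pathWeight, hsum, hagree m (by simp), hvm]
    simpa using add_le_add_left hv (B k j)

lemma zero_le_mstar_self (i : Fin n) : 0 ≤ mstar B i i :=
  le_sup_of_le (mem_range.2 (Nat.zero_lt_of_lt i.2)) (by simp [mpow_zero_apply])

def mmulVec (A : Fin n → Fin n → WithBot ℝ) (u : Fin n → WithBot ℝ) (i : Fin n) : WithBot ℝ :=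
  univ.sup fun j => A i j + u j

lemma le_mmulVec_mstar (u : Fin n → WithBot ℝ) (i : Fin n) : u i ≤ mmulVec (mstar B) u i :=
  le_sup_of_le (mem_univ i) (le_add_of_nonneg_left (zero_le_mstar_self B i))

end MaxPlus

lemma exists_lt_le_map_eq {n : ℕ} (v : ℕ → Fin n) : ∃ a b, a < b ∧ b ≤ n ∧ v a = v b := by
  obtain ⟨a, b, hab, h⟩ :=
    Fintype.exists_ne_map_eq_of_card_lt (fun t : Fin (n + 1) => v t) (by simp)
  rcases Fin.lt_or_lt_of_ne hab with hab | hab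
  · exact ⟨a, b, hab, Nat.lt_succ_iff.1 b.2, h⟩
  · exact ⟨b, a, hab, Nat.lt_succ_iff.1 a.2, h.symm⟩

section NonposCycles

variable {n : ℕ} {B : Fin n → Fin n → WithBot ℝ}

lemma mpow_le_mstar (hB : ∀ m ∈ Icc 1 n, ∀ i, mpow B m i i ≤ 0) (m : ℕ) (i j : Fin n) :
    mpow B m i j ≤ mstar B i j := by
  induction m using Nat.strong_induction_on generalizing i j with
  | _ m ih =>
  by_cases hm : m < n
  · exact le_sup (f := fun m => mpow B m i j) (mem_range.2 hm)
  by_cases hbot : mpow B m i j = ⊥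
  · simp [hbot]
  obtain ⟨v, rfl, rfl, hv⟩ := exists_mpow_le_pathWeight B hbot
  obtain ⟨a, b, hab, hbn, hvab⟩ := exists_lt_le_map_eq v
  obtain ⟨c, rfl⟩ := Nat.exists_eq_add_of_lt hab
  obtain ⟨d, rfl⟩ := Nat.exists_eq_add_of_le (show a + c + 1 ≤ m by omega)
  have hcycle : pathWeight B (fun t => v (a + t)) (c + 1) ≤ 0 := by
    refine (pathWeight_le_mpow B _ _).trans ?_
    simpa [← add_assoc, ← hvab] using hB (c + 1) (mem_Icc.2 ⟨by omega, by omega⟩) (v a)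
  calc mpow B (a + c + 1 + d) (v 0) (v (a + c + 1 + d))
      ≤ pathWeight B v a + pathWeight B (fun t => v (a + t)) (c + 1)
          + pathWeight B (fun t => v (a + c + 1 + t)) d := by
        rwa [pathWeight_add, add_assoc a, pathWeight_add] at hv
    _ ≤ mpow B a (v 0) (v a) + 0 + mpow B d (v a) (v (a + c + 1 + d)) := by
        gcongr
        · exact pathWeight_le_mpow B v a
        · simpa [hvab] using pathWeight_le_mpow B (fun t => v (a + c + 1 + t)) d
    _ ≤ mpow B (a + d) (v 0) (v (a + c + 1 + d)) := by
        simpa using mpow_add_apply_le B a d _ _ _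
    _ ≤ mstar B (v 0) (v (a + c + 1 + d)) := ih _ (by omega) _ _

lemma add_mstar_le (hB : ∀ m ∈ Icc 1 n, ∀ i, mpow B m i i ≤ 0) (i j k : Fin n) :
    B i j + mstar B j k ≤ mstar B i k := by
  rw [mstar, WithBot.add_finset_sup, ← mpow_one_apply B i j]
  exact Finset.sup_le fun m _ => (mpow_add_apply_le B 1 m i j k).trans (mpow_le_mstar hB _ i k)

lemma add_mmulVec_mstar_le (hB : ∀ m ∈ Icc 1 n, ∀ i, mpow B m i i ≤ 0) (u : Fin n → WithBot ℝ)
    (i j : Fin n) : B i j + mmulVec (mstar B) u j ≤ mmulVec (mstar B) u i := by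
  rw [mmulVec, WithBot.add_finset_sup]
  refine Finset.sup_le fun k hk => ?_
  rw [← add_assoc]
  exact (add_le_add_left (add_mstar_le hB i j k) _).trans
    (le_sup (f := fun k => mstar B i k + u k) hk)

end NonposCycles

section Potentials

variable {n : ℕ} {B : Fin n → Fin n → WithBot ℝ} {x : Fin n → ℝ}

lemma mpow_le_coe_sub (hx : ∀ i j, B i j ≤ ↑(x i - x j)) (m : ℕ) (i j : Fin n) :
    mpow B m i j ≤ ↑(x i - x j) := by
  induction m generalizing j with
  | zero => by_cases h : i = j <;> simp [mpow_zero_apply, h]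
  | succ m ih =>
    rw [mpow_succ_apply]
    refine Finset.sup_le fun k _ => (add_le_add (ih k) (hx k j)).trans_eq ?_
    rw [← WithBot.coe_add, sub_add_sub_cancel]

lemma mstar_le_coe_sub (hx : ∀ i j, B i j ≤ ↑(x i - x j)) (i j : Fin n) :
    mstar B i j ≤ ↑(x i - x j) :=
  Finset.sup_le fun m _ => mpow_le_coe_sub hx m i j

end Potentials

section Optimization

variable {n : ℕ} {B : Fin n → Fin n → WithBot ℝ}

lemma mmulVec_coe_le_coe_iff {x : Fin n → ℝ} {i : Fin n} :
    mmulVec B (fun j => ↑(x j)) i ≤ ↑(x i) ↔ ∀ j, B i j ≤ ↑(x i - x j) := by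
  simp only [mmulVec, Finset.sup_le_iff, mem_univ, true_implies, WithBot.add_coe_le_coe_iff_s6]

lemma neg_add_mstar_add_le_obj (p : Fin n → WithBot ℝ) (q : Fin n → ℝ) {x : Fin n → ℝ}
    (hx : ∀ i j, B i j ≤ ↑(x i - x j)) (i j : Fin n) :
    ((-(q i) : ℝ) : WithBot ℝ) + mstar B i j + p j ≤ obj p q x :=
  calc ((-(q i) : ℝ) : WithBot ℝ) + mstar B i j + p j
      ≤ ((-(q i) : ℝ) : WithBot ℝ) + ↑(x i - x j) + p j := by
        gcongr; exact mstar_le_coe_sub hx i j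
    _ = ((x i - q i : ℝ) : WithBot ℝ) + (p j + ((-(x j) : ℝ) : WithBot ℝ)) := by
        rw [← WithBot.coe_add, add_comm (p j), ← add_assoc, ← WithBot.coe_add]
        congr 2
        ring
    _ ≤ obj p q x :=
        add_le_add (le_sup (f := fun i => ((x i - q i : ℝ) : WithBot ℝ)) (mem_univ i))
          (le_sup (f := fun j => p j + ((-(x j) : ℝ) : WithBot ℝ)) (mem_univ j))

lemma exists_feasible_obj_le_s6 (hB : ∀ m ∈ Icc 1 n, ∀ i, mpow B m i i ≤ 0)
    (p : Fin n → WithBot ℝ) (q : Fin n → ℝ) (g : Fin n → WithBot ℝ) {θ : ℝ}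
    (hθ : ∀ i j, ((-(q i) : ℝ) : WithBot ℝ) + mstar B i j + p j ≤ θ) :
    ∃ x : Fin n → ℝ, (∀ i, mmulVec B (fun j => ↑(x j)) i ⊔ g i ≤ ↑(x i)) ∧ obj p q x ≤ θ := by
  obtain ⟨c, hc⟩ := WithBot.exists_forall_le_coe g
  obtain ⟨s, hs⟩ :=
    WithBot.exists_forall_le_coe fun ij : Fin n × Fin n => mstar B ij.1 ij.2
  obtain ⟨μ, hμ⟩ := Finite.exists_le fun i => s + c - θ - q i
  set u : Fin n → WithBot ℝ := fun j => (p j + ↑μ) ⊔ ↑c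
  have hu := le_mmulVec_mstar B u
  choose x hx using fun i => WithBot.ne_bot_iff_exists.1
    (ne_bot_of_le_ne_bot WithBot.coe_ne_bot (le_sup_right.trans (hu i)))
  have hx_le : ∀ i, x i ≤ θ + q i + μ := by
    intro i
    rw [← WithBot.coe_le_coe, hx]
    refine Finset.sup_le fun j _ => ?_
    rw [add_max]
    refine max_le ?_ ?_
    · have h := hθ i j
      rw [add_assoc, add_comm, WithBot.add_coe_le_coe_iff_s6, sub_neg_eq_add] at h
      calc mstar B i j + (p j + ↑μ) = mstar B i j + p j + ↑μ := (add_assoc ..).symm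
        _ ≤ ↑(θ + q i) + ↑μ := add_le_add_left h _
        _ = ↑(θ + q i + μ) := (WithBot.coe_add ..).symm
    · calc mstar B i j + ↑c ≤ ↑s + ↑c := add_le_add_left (hs (i, j)) _
        _ = ↑(s + c) := (WithBot.coe_add ..).symm
        _ ≤ ↑(θ + q i + μ) := WithBot.coe_le_coe.2 (by linarith [hμ i])
  refine ⟨x, fun i => sup_le ?_ ?_, ?_⟩
  · refine Finset.sup_le fun j _ => ?_
    show B i j + ↑(x j) ≤ ↑(x i)
    rw [hx, hx]
    exact add_mmulVec_mstar_le hB u i j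
  · rw [hx]
    exact (hc i).trans (le_sup_right.trans (hu i))
  · have h₁ : (univ.sup fun i => ((x i - q i : ℝ) : WithBot ℝ)) ≤ ↑(θ + μ) :=
      Finset.sup_le fun i _ => WithBot.coe_le_coe.2 (by linarith [hx_le i])
    have h₂ : (univ.sup fun j => p j + ((-(x j) : ℝ) : WithBot ℝ)) ≤ ↑(-μ) := by
      refine Finset.sup_le fun j _ => ?_
      have h : p j + ↑μ ≤ ↑(x j) := by rw [hx]; exact le_sup_left.trans (hu j)
      rw [WithBot.add_coe_le_coe_iff_s6] at h ⊢
      convert h using 2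
      ring
    calc obj p q x ≤ ↑(θ + μ) + ↑(-μ) := add_le_add h₁ h₂
      _ = θ := by rw [← WithBot.coe_add, add_neg_cancel_right]

end Optimization

/-- Linear-inequality constrained problem: the minimum of f over regular x with
Bx ⊕ g ≤ x equals θ = max_{i,j}(−q_i + (B*)_{ij} + p_j), a real number, and it is
attained by some feasible regular x. -/
theorem stmt_6 {n : ℕ} (p : Fin n → WithBot ℝ) (q : Fin n → ℝ)
    (g : Fin n → WithBot ℝ) (B : Fin n → Fin n → WithBot ℝ)
    (hp : ∃ i, p i ≠ ⊥)
    (hB : ∀ m ∈ Finset.Icc 1 n, ∀ i, mpow B m i i ≤ 0) :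
    ∃ θ : ℝ,
      ((θ : WithBot ℝ) = Finset.univ.sup fun i => Finset.univ.sup fun j =>
          ((-(q i) : ℝ) : WithBot ℝ) + mstar B i j + p j) ∧
      IsLeast
        {v | ∃ x : Fin n → ℝ,
          (∀ i, (Finset.univ.sup fun j => B i j + ((x j : ℝ) : WithBot ℝ)) ⊔ g i ≤
            ((x i : ℝ) : WithBot ℝ)) ∧
          obj p q x = v}
        (θ : WithBot ℝ) := by
  obtain ⟨j₀, hj₀⟩ := hp
  have hterm : ∀ i j, ((-(q i) : ℝ) : WithBot ℝ) + mstar B i j + p j ≤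
      univ.sup fun i => univ.sup fun j => ((-(q i) : ℝ) : WithBot ℝ) + mstar B i j + p j :=
    fun i j => le_sup_of_le (mem_univ i) (le_sup_of_le (mem_univ j) le_rfl)
  obtain ⟨θ, hθ⟩ := WithBot.ne_bot_iff_exists.1 <| ne_bot_of_le_ne_bot
    (by simpa [hj₀] using ne_bot_of_le_ne_bot (by simp) (zero_le_mstar_self B j₀)) (hterm j₀ j₀)
  have hlower : ∀ x : Fin n → ℝ, (∀ i, mmulVec B (fun j => ↑(x j)) i ⊔ g i ≤ ↑(x i)) →
      (θ : WithBot ℝ) ≤ obj p q x := fun x hx =>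
    hθ ▸ Finset.sup_le fun i _ => Finset.sup_le fun j _ => neg_add_mstar_add_le_obj p q
      (fun i => mmulVec_coe_le_coe_iff.1 (le_sup_left.trans (hx i))) i j
  obtain ⟨x, hx, hobj⟩ := exists_feasible_obj_le_s6 hB p q g fun i j => hθ ▸ hterm i j
  exact ⟨θ, hθ, ⟨x, hx, le_antisymm hobj (hlower x hx)⟩, fun _ ⟨x, hx, hv⟩ => hv ▸ hlower x hx⟩
end

section
/- Let p ∈ (ℝ∪{−∞})ⁿ be nonzero, q ∈ ℝⁿ regular, g ∈ (ℝ∪{−∞})ⁿ, B an n×n matrix over ℝ∪{−∞} with Tr(B) ≤ 0, and θ = max_{1≤i,j≤n}( −q_i + (B*)_{ij} + p_j ) (a real number). Define the n×n matrix S by S_{ij} = max( p_i − θ − q_j , B_{ij} ). Then a regular vector x ∈ ℝⁿ is a feasible minimizer — i.e. it satisfies max(max_j(B_{ij}+x_j), g_i) ≤ x_i for all i and f(x) = θ — if and only if there exists u ∈ ℝⁿ with u_i ≥ g_i for all i and x_i = max_{1≤j≤n}( (S*)_{ij} + u_j ) for all i. -/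
/-
Write `R = θ⁻¹ p q⁻`, so that `S = R ⊕ B`. For real `x`, `R x ≤ x` says exactly `f(x) ≤ θ`,
while `B x ≤ x` gives `B* x ≤ x` and hence `f(x) ≥ θ`; so the feasible minimizers are the
real `x ≥ g` with `S x ≤ x`. The choice of `θ` means `q⁻ B* p ≤ θ`, i.e. `R B* R ≤ R`, and then
every power of `S` is bounded by `B* ⊕ B* R B*`, whose diagonal is nonpositive. Thus `S` has no
positive cycles, so `S S* ≤ S*`: the vectors `S* u` satisfy `S x ≤ x`, and conversely such an `x`
equals `S* x`.
-/

section MaxPlus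

variable {n : ℕ}

local infixl:70 " ⊗ " => mmul

lemma add_finset_sup {ι : Type*} (a : WithBot ℝ) (s : Finset ι) (f : ι → WithBot ℝ) :
    a + s.sup f = s.sup fun i => a + f i :=
  Finset.apply_sup_eq_sup_comp_of_linearOrder (a + ·) (fun _ _ h => add_le_add_right h a)
    (WithBot.add_bot a)

lemma finset_sup_add {ι : Type*} (a : WithBot ℝ) (s : Finset ι) (f : ι → WithBot ℝ) :
    s.sup f + a = s.sup fun i => f i + a := by
  simp only [add_comm _ a, add_finset_sup]

noncomputable def mvec (A : Fin n → Fin n → WithBot ℝ) (v : Fin n → WithBot ℝ) :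
    Fin n → WithBot ℝ :=
  fun i => Finset.univ.sup fun j => A i j + v j

lemma le_mvec (A : Fin n → Fin n → WithBot ℝ) (v : Fin n → WithBot ℝ) (i j : Fin n) :
    A i j + v j ≤ mvec A v i :=
  Finset.le_sup (f := fun j => A i j + v j) (Finset.mem_univ j)

lemma mvec_le_iff {A : Fin n → Fin n → WithBot ℝ} {v w : Fin n → WithBot ℝ} :
    mvec A v ≤ w ↔ ∀ i j, A i j + v j ≤ w i := by
  simp [Pi.le_def, mvec]

lemma le_mmul (A C : Fin n → Fin n → WithBot ℝ) (i k j : Fin n) :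
    A i k + C k j ≤ (A ⊗ C) i j :=
  le_mvec A (fun k => C k j) i k

lemma mmul_le_iff {A C M : Fin n → Fin n → WithBot ℝ} :
    A ⊗ C ≤ M ↔ ∀ i j k, A i k + C k j ≤ M i j := by
  simp [Pi.le_def, mmul]

lemma mmul_mmul_apply_le_iff {A C D : Fin n → Fin n → WithBot ℝ} {i j : Fin n}
    {c : WithBot ℝ} :
    (A ⊗ C ⊗ D) i j ≤ c ↔ ∀ k l, A i k + C k l + D l j ≤ c := by
  simp only [mmul, finset_sup_add, Finset.sup_le_iff, Finset.mem_univ, true_implies]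
  exact forall_comm

lemma mvec_mono {A A' : Fin n → Fin n → WithBot ℝ} {v v' : Fin n → WithBot ℝ}
    (hA : A ≤ A') (hv : v ≤ v') : mvec A v ≤ mvec A' v' :=
  fun i => Finset.sup_mono_fun fun j _ => add_le_add (hA i j) (hv j)

lemma mmul_mono {A A' C C' : Fin n → Fin n → WithBot ℝ} (hA : A ≤ A') (hC : C ≤ C') :
    A ⊗ C ≤ A' ⊗ C' :=
  fun i j => mvec_mono hA (fun k => hC k j) i

lemma mvec_mmul (A C : Fin n → Fin n → WithBot ℝ) (v : Fin n → WithBot ℝ) :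
    mvec (A ⊗ C) v = mvec A (mvec C v) := by
  funext i
  simp only [mvec, mmul, finset_sup_add, add_finset_sup, add_assoc]
  exact Finset.sup_comm _ _ _

lemma mmul_assoc (A C D : Fin n → Fin n → WithBot ℝ) : A ⊗ C ⊗ D = A ⊗ (C ⊗ D) := by
  funext i j
  exact congrFun (mvec_mmul A C fun k => D k j) i

lemma mvec_sup (A A' : Fin n → Fin n → WithBot ℝ) (v : Fin n → WithBot ℝ) :
    mvec (A ⊔ A') v = mvec A v ⊔ mvec A' v := by
  funext i
  simp only [mvec, Pi.sup_apply, max_add]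
  exact Finset.sup_sup

lemma mmul_sup_left (A A' C : Fin n → Fin n → WithBot ℝ) :
    (A ⊔ A') ⊗ C = A ⊗ C ⊔ A' ⊗ C := by
  funext i j
  exact congrFun (mvec_sup A A' fun k => C k j) i

lemma mmul_sup_right (C A A' : Fin n → Fin n → WithBot ℝ) :
    C ⊗ (A ⊔ A') = C ⊗ A ⊔ C ⊗ A' := by
  funext i j
  simp only [mmul, Pi.sup_apply, add_max]
  exact Finset.sup_sup

lemma mvec_finset_sup {ι : Type*} (s : Finset ι) (F : ι → Fin n → Fin n → WithBot ℝ)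
    (v : Fin n → WithBot ℝ) : mvec (s.sup F) v = s.sup fun k => mvec (F k) v := by
  funext i
  simp only [mvec, Finset.sup_apply, finset_sup_add]
  exact Finset.sup_comm _ _ _

lemma mvec_mpow_zero (A : Fin n → Fin n → WithBot ℝ) (v : Fin n → WithBot ℝ) :
    mvec (mpow A 0) v = v := by
  funext i
  refine le_antisymm (Finset.sup_le fun j _ => ?_)
    (by simpa [mpow] using le_mvec (mpow A 0) v i i)
  by_cases hij : i = j
  · subst hij; simp [mpow]
  · simp [mpow, hij]

lemma mpow_zero_mmul (A C : Fin n → Fin n → WithBot ℝ) : mpow A 0 ⊗ C = C := by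
  funext i j
  exact congrFun (mvec_mpow_zero A fun k => C k j) i

lemma mmul_mpow_zero (A C : Fin n → Fin n → WithBot ℝ) : C ⊗ mpow A 0 = C := by
  funext i j
  refine le_antisymm (Finset.sup_le fun k _ => ?_)
    (by simpa [mpow] using le_mmul C (mpow A 0) i j j)
  by_cases hkj : k = j
  · subst hkj; simp [mpow]
  · simp [mpow, hkj]

lemma mpow_one (A : Fin n → Fin n → WithBot ℝ) : mpow A 1 = A :=
  mpow_zero_mmul A A

lemma mpow_add (A : Fin n → Fin n → WithBot ℝ) (a b : ℕ) :
    mpow A (a + b) = mpow A a ⊗ mpow A b := by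
  induction b with
  | zero => exact (mmul_mpow_zero A _).symm
  | succ b ih => rw [← add_assoc, mpow, ih, mmul_assoc, ← mpow]

lemma mpow_add_le (A : Fin n → Fin n → WithBot ℝ) (a b : ℕ) (i k j : Fin n) :
    mpow A a i k + mpow A b k j ≤ mpow A (a + b) i j :=
  mpow_add A a b ▸ le_mmul _ _ i k j

lemma mvec_mpow_le {A : Fin n → Fin n → WithBot ℝ} {v : Fin n → WithBot ℝ}
    (h : mvec A v ≤ v) (m : ℕ) : mvec (mpow A m) v ≤ v := by
  induction m with
  | zero => rw [mvec_mpow_zero]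
  | succ m ih => rw [mpow, mvec_mmul]; exact (mvec_mono le_rfl h).trans ih

lemma mpow_le_of_mmul_le {A M : Fin n → Fin n → WithBot ℝ} (h0 : mpow A 0 ≤ M)
    (h : M ⊗ A ≤ M) (m : ℕ) : mpow A m ≤ M := by
  induction m with
  | zero => exact h0
  | succ m ih => exact (mmul_mono ih le_rfl).trans h

lemma mstar_eq_sup (A : Fin n → Fin n → WithBot ℝ) :
    mstar A = (Finset.range n).sup (mpow A) := by
  funext i j
  simp only [mstar, Finset.sup_apply]

lemma mpow_le_mstar_s7 (A : Fin n → Fin n → WithBot ℝ) {m : ℕ} (hm : m < n) :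
    mpow A m ≤ mstar A :=
  mstar_eq_sup A ▸ Finset.le_sup (f := mpow A) (Finset.mem_range.2 hm)

lemma mpow_zero_le_mstar (A : Fin n → Fin n → WithBot ℝ) : mpow A 0 ≤ mstar A :=
  fun i => mpow_le_mstar_s7 A i.pos i

lemma mvec_mstar_le {A : Fin n → Fin n → WithBot ℝ} {v : Fin n → WithBot ℝ}
    (h : mvec A v ≤ v) : mvec (mstar A) v ≤ v := by
  rw [mstar_eq_sup, mvec_finset_sup]
  exact Finset.sup_le fun m _ => mvec_mpow_le h m

lemma le_mvec_mstar (A : Fin n → Fin n → WithBot ℝ) (v : Fin n → WithBot ℝ) :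
    v ≤ mvec (mstar A) v :=
  (mvec_mpow_zero A v).symm.le.trans (mvec_mono (mpow_zero_le_mstar A) le_rfl)

lemma mvec_mstar_eq_self {A : Fin n → Fin n → WithBot ℝ} {v : Fin n → WithBot ℝ}
    (h : mvec A v ≤ v) : mvec (mstar A) v = v :=
  le_antisymm (mvec_mstar_le h) (le_mvec_mstar A v)

lemma mstar_mmul_mstar_le {A : Fin n → Fin n → WithBot ℝ} (h : ∀ m, mpow A m ≤ mstar A) :
    mstar A ⊗ mstar A ≤ mstar A := by
  refine mmul_le_iff.2 fun i j k => ?_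
  simp only [mstar, finset_sup_add, add_finset_sup, Finset.sup_le_iff]
  exact fun b _ a _ => (mpow_add_le A a b i k j).trans (h _ i j)

lemma mmul_mstar_le {A : Fin n → Fin n → WithBot ℝ} (h : ∀ m, mpow A m ≤ mstar A) :
    A ⊗ mstar A ≤ mstar A :=
  (mmul_mono ((mpow_one A).ge.trans (h 1)) le_rfl).trans (mstar_mmul_mstar_le h)

lemma sum_Ico_le_mpow (A : Fin n → Fin n → WithBot ℝ) (f : ℕ → Fin n) {a b : ℕ}
    (hab : a ≤ b) :
    ∑ r ∈ Finset.Ico a b, A (f r) (f (r + 1)) ≤ mpow A (b - a) (f a) (f b) := by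
  induction b, hab using Nat.le_induction with
  | base => simp [mpow]
  | succ b hab ih =>
    rw [Finset.sum_Ico_succ_top hab, Nat.sub_add_comm hab]
    exact (add_le_add_left ih _).trans (le_mmul _ _ _ _ _)

lemma exists_path_of_mpow_ne_bot (A : Fin n → Fin n → WithBot ℝ) {m : ℕ} {i j : Fin n}
    (h : mpow A m i j ≠ ⊥) :
    ∃ f : ℕ → Fin n, f 0 = i ∧ f m = j ∧
      mpow A m i j = ∑ t ∈ Finset.range m, A (f t) (f (t + 1)) := by
  induction m generalizing j with
  | zero =>
    by_cases hij : i = j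
    · exact ⟨fun _ => i, rfl, hij, by simp [mpow, hij]⟩
    · simp [mpow, hij] at h
  | succ m ih =>
    obtain ⟨k, -, hk⟩ := Finset.exists_mem_eq_sup Finset.univ ⟨i, Finset.mem_univ i⟩
      fun k => mpow A m i k + A k j
    have hstep : mpow A (m + 1) i j = mpow A m i k + A k j := hk
    rw [hstep] at h ⊢
    obtain ⟨f, hf0, hfm, hf⟩ := ih (WithBot.add_ne_bot.1 h).1
    refine ⟨fun t => if t ≤ m then f t else j, by simpa using hf0, by simp, ?_⟩
    simp only [Finset.sum_range_succ, hf, le_rfl, if_true, Nat.not_succ_le_self, if_false, hfm]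
    congr 1
    refine Finset.sum_congr rfl fun t ht => ?_
    rw [Finset.mem_range] at ht
    rw [if_pos ht.le, if_pos (Nat.succ_le_of_lt ht)]

lemma mpow_le_mstar_of_diag_nonpos {A : Fin n → Fin n → WithBot ℝ}
    (hA : ∀ m ∈ Finset.Icc 1 n, ∀ i, mpow A m i i ≤ 0) (m : ℕ) :
    mpow A m ≤ mstar A := by
  induction m using Nat.strong_induction_on with | _ m ih => ?_
  intro i j
  rcases lt_or_ge m n with hmn | hnm
  · exact mpow_le_mstar_s7 A hmn i j
  rcases eq_or_ne (mpow A m i j) ⊥ with hbot | hbot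
  · simp [hbot]
  obtain ⟨f, rfl, rfl, hf⟩ := exists_path_of_mpow_ne_bot A hbot
  -- among the n + 1 vertices f 0, …, f n two coincide, closing a cycle of length ≤ n
  obtain ⟨a, b, hab, hfab⟩ := Fintype.exists_ne_map_eq_of_card_lt (fun t : Fin (n + 1) => f t)
    (by simp)
  obtain ⟨s, t, hst, htn, hfst⟩ : ∃ s t, s < t ∧ t ≤ n ∧ f s = f t := by
    rcases lt_or_gt_of_ne (Fin.val_ne_of_ne hab) with h | h
    · exact ⟨a, b, h, Nat.lt_succ_iff.1 b.2, hfab⟩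
    · exact ⟨b, a, h, Nat.lt_succ_iff.1 a.2, hfab.symm⟩
  have hsplit : mpow A m (f 0) (f m) =
      ∑ r ∈ Finset.Ico 0 s, A (f r) (f (r + 1)) +
        ∑ r ∈ Finset.Ico s t, A (f r) (f (r + 1)) +
        ∑ r ∈ Finset.Ico t m, A (f r) (f (r + 1)) := by
    rw [hf, Finset.range_eq_Ico, Finset.sum_Ico_consecutive _ (Nat.zero_le s) hst.le,
      Finset.sum_Ico_consecutive _ (Nat.zero_le t) (htn.trans hnm)]
  calc mpow A m (f 0) (f m)
      ≤ mpow A (s - 0) (f 0) (f s) + mpow A (t - s) (f s) (f t) + mpow A (m - t) (f t) (f m) := by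
        rw [hsplit]
        gcongr <;> exact sum_Ico_le_mpow A f (by omega)
    _ = mpow A s (f 0) (f s) + mpow A (t - s) (f s) (f s) + mpow A (m - t) (f s) (f m) := by
        rw [Nat.sub_zero, ← hfst]
    _ ≤ mpow A s (f 0) (f s) + 0 + mpow A (m - t) (f s) (f m) := by
        gcongr
        exact hA (t - s) (Finset.mem_Icc.2 ⟨by omega, by omega⟩) (f s)
    _ ≤ mpow A (s + (m - t)) (f 0) (f m) := by
        rw [add_zero]
        exact mpow_add_le A _ _ _ _ _
    _ ≤ mstar A (f 0) (f m) := ih _ (by omega) _ _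

lemma mstar_diag_nonpos {B : Fin n → Fin n → WithBot ℝ}
    (hB : ∀ m ∈ Finset.Icc 1 n, ∀ i, mpow B m i i ≤ 0) (i : Fin n) : mstar B i i ≤ 0 := by
  refine Finset.sup_le fun m hm => ?_
  rcases Nat.eq_zero_or_pos m with rfl | hm0
  · simp [mpow]
  · exact hB m (Finset.mem_Icc.2 ⟨hm0, (Finset.mem_range.1 hm).le⟩) i

lemma mpow_sup_le {R B : Fin n → Fin n → WithBot ℝ} (hB : ∀ m, mpow B m ≤ mstar B)
    (hR : R ⊗ mstar B ⊗ R ≤ R) (m : ℕ) :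
    mpow (R ⊔ B) m ≤ mstar B ⊔ mstar B ⊗ R ⊗ mstar B := by
  set K := mstar B
  have hKK : K ⊗ K ≤ K := mstar_mmul_mstar_le hB
  have hKR : K ⊗ R ≤ K ⊗ R ⊗ K :=
    (mmul_mpow_zero B (K ⊗ R)).symm.le.trans (mmul_mono le_rfl (mpow_zero_le_mstar B))
  refine mpow_le_of_mmul_le (A := R ⊔ B) (le_sup_of_le_left ?_) ?_ m
  · exact mpow_zero_le_mstar B
  calc (K ⊔ K ⊗ R ⊗ K) ⊗ (R ⊔ B) ≤ (K ⊔ K ⊗ R ⊗ K) ⊗ (R ⊔ K) :=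
        mmul_mono le_rfl (sup_le_sup_left ((mpow_one B).ge.trans (hB 1)) R)
    _ = K ⊗ R ⊔ K ⊗ K ⊔ (K ⊗ R ⊗ K ⊗ R ⊔ K ⊗ R ⊗ K ⊗ K) := by
        rw [mmul_sup_left, mmul_sup_right, mmul_sup_right]
    _ ≤ K ⊔ K ⊗ R ⊗ K := by
        refine sup_le (sup_le (le_sup_of_le_right hKR) (le_sup_of_le_left hKK)) (sup_le ?_ ?_)
        · rw [mmul_assoc, mmul_assoc, ← mmul_assoc R]
          exact le_sup_of_le_right ((mmul_mono le_rfl hR).trans hKR)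
        · rw [mmul_assoc (K ⊗ R)]
          exact le_sup_of_le_right (mmul_mono le_rfl hKK)

def mouter (p w : Fin n → WithBot ℝ) : Fin n → Fin n → WithBot ℝ := fun a b => p a + w b

lemma mouter_mmul_mmul_mouter_le {p w : Fin n → WithBot ℝ} {K : Fin n → Fin n → WithBot ℝ}
    (hpw : ∀ k l, w k + K k l + p l ≤ 0) : mouter p w ⊗ K ⊗ mouter p w ≤ mouter p w := by
  intro i j
  refine mmul_mmul_apply_le_iff.2 fun k l => ?_
  calc p i + w k + K k l + (p l + w j) = mouter p w i j + (w k + K k l + p l) := by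
        simp only [mouter]; ac_rfl
    _ ≤ mouter p w i j := add_le_of_nonpos_right (hpw k l)

lemma mmul_mouter_mmul_diag_nonpos {p w : Fin n → WithBot ℝ}
    {K : Fin n → Fin n → WithBot ℝ}
    (hKK : K ⊗ K ≤ K) (hpw : ∀ k l, w k + K k l + p l ≤ 0) (i : Fin n) :
    (K ⊗ mouter p w ⊗ K) i i ≤ 0 := by
  refine mmul_mmul_apply_le_iff.2 fun k l => ?_
  calc K i k + (p k + w l) + K l i = w l + (K l i + K i k) + p k := by ac_rfl
    _ ≤ w l + K l k + p k := by gcongr; exact (le_mmul K K l i k).trans (hKK l k)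
    _ ≤ 0 := hpw l k

lemma mpow_mouter_sup_diag_nonpos {p w : Fin n → WithBot ℝ}
    {B : Fin n → Fin n → WithBot ℝ}
    (hB : ∀ m ∈ Finset.Icc 1 n, ∀ i, mpow B m i i ≤ 0)
    (hpw : ∀ k l, w k + mstar B k l + p l ≤ 0) (m : ℕ) (i : Fin n) :
    mpow (mouter p w ⊔ B) m i i ≤ 0 := by
  have hBK := mpow_le_mstar_of_diag_nonpos hB
  refine (mpow_sup_le hBK (mouter_mmul_mmul_mouter_le hpw) m i i).trans (sup_le ?_ ?_)
  · exact mstar_diag_nonpos hB i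
  · exact mmul_mouter_mmul_diag_nonpos (mstar_mmul_mstar_le hBK) hpw i

lemma obj_le_iff {p : Fin n → WithBot ℝ} {q x : Fin n → ℝ} {c : WithBot ℝ} :
    obj p q x ≤ c ↔ ∀ i j,
      ((x i - q i : ℝ) : WithBot ℝ) + (p j + ((-(x j) : ℝ) : WithBot ℝ)) ≤ c := by
  simp only [obj, finset_sup_add, add_finset_sup, Finset.sup_le_iff, Finset.mem_univ, true_implies]
  exact forall_comm

lemma mvec_mouter_le_iff_obj_le (p : Fin n → WithBot ℝ) (q x : Fin n → ℝ) (θ : ℝ) :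
    mvec (mouter p fun b => ((-θ - q b : ℝ) : WithBot ℝ)) (fun j => (x j : WithBot ℝ)) ≤
        (fun j => (x j : WithBot ℝ)) ↔ obj p q x ≤ θ := by
  rw [mvec_le_iff, obj_le_iff, forall_comm]
  refine forall₂_congr fun j i => ?_
  simp only [mouter]
  generalize p i = a
  induction a using WithBot.recBotCoe with
  | bot => simp
  | coe a =>
    norm_cast
    constructor <;> intro h <;> linarith

lemma sup_neg_add_add_le_obj {p : Fin n → WithBot ℝ} {q x : Fin n → ℝ}
    {K : Fin n → Fin n → WithBot ℝ}
    (hK : mvec K (fun j => (x j : WithBot ℝ)) ≤ fun j => (x j : WithBot ℝ)) :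
    (Finset.univ.sup fun i => Finset.univ.sup fun j =>
        ((-(q i) : ℝ) : WithBot ℝ) + K i j + p j) ≤
      obj p q x := by
  simp only [Finset.sup_le_iff, Finset.mem_univ, true_implies]
  intro i j
  refine le_trans ?_ ((obj_le_iff (c := obj p q x)).1 le_rfl i j)
  have hij := mvec_le_iff.1 hK i j
  generalize K i j = k at hij ⊢
  generalize p j = a
  induction k using WithBot.recBotCoe with
  | bot => simp
  | coe k =>
    induction a using WithBot.recBotCoe with
    | bot => simp
    | coe a =>
      norm_cast at hij ⊢
      linarith

lemma coe_neg_sub_add_nonpos {c θ : ℝ} {a : WithBot ℝ}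
    (h : ((-c : ℝ) : WithBot ℝ) + a ≤ θ) : ((-θ - c : ℝ) : WithBot ℝ) + a ≤ 0 := by
  induction a using WithBot.recBotCoe with
  | bot => simp
  | coe a => norm_cast at h ⊢; linarith

lemma feasible_and_obj_eq_iff {p : Fin n → WithBot ℝ} {q x : Fin n → ℝ} {θ : ℝ}
    {B : Fin n → Fin n → WithBot ℝ} (g : Fin n → WithBot ℝ)
    (hθ : (θ : WithBot ℝ) = Finset.univ.sup fun i => Finset.univ.sup fun j =>
        ((-(q i) : ℝ) : WithBot ℝ) + mstar B i j + p j) :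
    ((∀ i, mvec B (fun j => (x j : WithBot ℝ)) i ⊔ g i ≤ x i) ∧ obj p q x = θ) ↔
      mvec (mouter p (fun b => ((-θ - q b : ℝ) : WithBot ℝ)) ⊔ B)
          (fun j => (x j : WithBot ℝ)) ≤ (fun j => (x j : WithBot ℝ)) ∧
        g ≤ fun j => (x j : WithBot ℝ) := by
  rw [mvec_sup, sup_le_iff, mvec_mouter_le_iff_obj_le]
  constructor
  · rintro ⟨hfeas, hobj⟩
    exact ⟨⟨hobj.le, fun i => le_sup_left.trans (hfeas i)⟩,
      fun i => le_sup_right.trans (hfeas i)⟩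
  · rintro ⟨⟨hobj, hBx⟩, hgx⟩
    refine ⟨fun i => sup_le (hBx i) (hgx i), le_antisymm hobj ?_⟩
    rw [hθ]
    exact sup_neg_add_add_le_obj (mvec_mstar_le hBx)

lemma mvec_le_self_and_le_iff {A : Fin n → Fin n → WithBot ℝ} (hA : A ⊗ mstar A ≤ mstar A)
    (g : Fin n → WithBot ℝ) (x : Fin n → ℝ) :
    (mvec A (fun j => (x j : WithBot ℝ)) ≤ (fun j => (x j : WithBot ℝ)) ∧
        g ≤ fun j => (x j : WithBot ℝ)) ↔
      ∃ u : Fin n → ℝ, (∀ i, g i ≤ u i) ∧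
        ∀ i, (x i : WithBot ℝ) = mvec (mstar A) (fun j => (u j : WithBot ℝ)) i := by
  constructor
  · rintro ⟨hAx, hgx⟩
    exact ⟨x, hgx, fun i => (congrFun (mvec_mstar_eq_self hAx) i).symm⟩
  · rintro ⟨u, hgu, hxu⟩
    have hx : (fun j => (x j : WithBot ℝ)) = mvec (mstar A) fun j => (u j : WithBot ℝ) :=
      funext hxu
    refine ⟨?_, fun i => (hgu i).trans ((le_mvec_mstar A _ i).trans (hxu i).ge)⟩
    rw [hx, ← mvec_mmul]
    exact mvec_mono hA le_rfl

end MaxPlus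

theorem stmt_7_general {n : ℕ} (p : Fin n → WithBot ℝ) (q : Fin n → ℝ)
    (g : Fin n → WithBot ℝ) (B : Fin n → Fin n → WithBot ℝ)
    (hB : ∀ m ∈ Finset.Icc 1 n, ∀ i, mpow B m i i ≤ 0)
    (θ : ℝ)
    (hθ : (θ : WithBot ℝ) = Finset.univ.sup fun i => Finset.univ.sup fun j =>
        ((-(q i) : ℝ) : WithBot ℝ) + mstar B i j + p j)
    (x : Fin n → ℝ) :
    ((∀ i, (Finset.univ.sup fun j => B i j + ((x j : ℝ) : WithBot ℝ)) ⊔ g i ≤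
        ((x i : ℝ) : WithBot ℝ)) ∧
      obj p q x = (θ : WithBot ℝ)) ↔
      ∃ u : Fin n → ℝ,
        (∀ i, g i ≤ ((u i : ℝ) : WithBot ℝ)) ∧
        (∀ i, ((x i : ℝ) : WithBot ℝ) =
          Finset.univ.sup fun j =>
            mstar (fun a b => (p a + ((-θ - q b : ℝ) : WithBot ℝ)) ⊔ B a b) i j +
              ((u j : ℝ) : WithBot ℝ)) := by
  let w : Fin n → WithBot ℝ := fun b => ((-θ - q b : ℝ) : WithBot ℝ)
  have hpw : ∀ k l, w k + mstar B k l + p l ≤ 0 := fun k l => by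
    rw [add_assoc]
    refine coe_neg_sub_add_nonpos ?_
    rw [← add_assoc, hθ]
    exact Finset.le_sup_of_le (Finset.mem_univ k) (Finset.le_sup_of_le (Finset.mem_univ l) le_rfl)
  have hS : ∀ m, mpow (mouter p w ⊔ B) m ≤ mstar (mouter p w ⊔ B) :=
    mpow_le_mstar_of_diag_nonpos fun m _ => mpow_mouter_sup_diag_nonpos hB hpw m
  exact (feasible_and_obj_eq_iff g hθ).trans (mvec_le_self_and_le_iff (mmul_mstar_le hS) g x)

/-- Characterization of the solutions of the linear-inequality constrained problem:
x is feasible (Bx ⊕ g ≤ x) with f(x) = θ iff x = S*u for some u ≥ g, u ∈ ℝⁿ,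
where S_{ij} = max(p_i − θ − q_j, B_{ij}). -/
theorem stmt_7 {n : ℕ} (p : Fin n → WithBot ℝ) (q : Fin n → ℝ)
    (g : Fin n → WithBot ℝ) (B : Fin n → Fin n → WithBot ℝ)
    (hp : ∃ i, p i ≠ ⊥)
    (hB : ∀ m ∈ Finset.Icc 1 n, ∀ i, mpow B m i i ≤ 0)
    (θ : ℝ)
    (hθ : (θ : WithBot ℝ) = Finset.univ.sup fun i => Finset.univ.sup fun j =>
        ((-(q i) : ℝ) : WithBot ℝ) + mstar B i j + p j)
    (x : Fin n → ℝ) :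
    ((∀ i, (Finset.univ.sup fun j => B i j + ((x j : ℝ) : WithBot ℝ)) ⊔ g i ≤
        ((x i : ℝ) : WithBot ℝ)) ∧
      obj p q x = (θ : WithBot ℝ)) ↔
      ∃ u : Fin n → ℝ,
        (∀ i, g i ≤ ((u i : ℝ) : WithBot ℝ)) ∧
        (∀ i, ((x i : ℝ) : WithBot ℝ) =
          Finset.univ.sup fun j =>
            mstar (fun a b => (p a + ((-θ - q b : ℝ) : WithBot ℝ)) ⊔ B a b) i j +
              ((u j : ℝ) : WithBot ℝ)) :=
  stmt_7_general p q g B hB θ hθ x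
end

section
/- Let C be an n×n matrix over ℝ∪{−∞} that is row-regular (every row contains at least one real entry), and let Δ = max_{1≤i,j≤n} C_{ij}. A vector x ∈ ℝⁿ satisfies F(x) = Δ, where F(x) = (max_{1≤i,j≤n}(C_{ij} + x_j)) + (max_{1≤k≤n}(−x_k)), if and only if there exists u ∈ ℝⁿ such that for every i: x_i = max( u_i , −Δ + max_{1≤j≤n}( (max_{1≤k≤n} C_{kj}) + u_j ) ). -/
/-!
Max-plus semifield modeled as `WithBot ℝ` (= ℝ ∪ {−∞}); `⊔` is max-plus addition.
A matrix is row-regular when every row has a real (≠ −∞) entry.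
-/

/-- The makespan objective F(x) = (max_{i,j}(C_{ij} + x_j)) + (max_k (−x_k)). -/
noncomputable def makespan {n : ℕ} (C : Fin n → Fin n → WithBot ℝ)
    (x : Fin n → ℝ) : WithBot ℝ :=
  (Finset.univ.sup fun i => Finset.univ.sup fun j => C i j + ((x j : ℝ) : WithBot ℝ)) +
    (Finset.univ.sup fun k => ((-(x k) : ℝ) : WithBot ℝ))

/-!
Writing `c` for the vector of column maxima of `C`, we have `F(x) = (cᵀx) ⊗ (min x)⁻¹`, and
`F(x) ≥ Δ` always, as is seen at a column `j` with `c_j = Δ`. Hence `F(x) = Δ` says exactly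
`A x ≤ x` for the max-plus rank-one matrix `A = Δ⁻¹ 1 cᵀ`. Since `cᵀ1 = Δ`, `A` is idempotent,
so its Kleene star is `I ⊕ A`, and the vectors with `A x ≤ x` are exactly the vectors `(I ⊕ A) u`.
-/

open Finset

theorem Finset.exists_mem_eq_of_sup_eq {ι α : Type*} [LinearOrder α] [OrderBot α]
    {s : Finset ι} {f : ι → α} {a : α} (ha : a ≠ ⊥) (h : s.sup f = a) : ∃ i ∈ s, f i = a := by
  have hs : s.Nonempty := by
    rw [nonempty_iff_ne_empty]
    rintro rfl
    exact ha h.symm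
  obtain ⟨i, hi, hfi⟩ := exists_mem_eq_sup s hs f
  exact ⟨i, hi, hfi ▸ h⟩

theorem map_sup_map_le_sup_map {α : Type*} [SemilatticeSup α] {f : α → α}
    (hsup : ∀ a b, f (a ⊔ b) = f a ⊔ f b) (hidem : ∀ a, f (f a) = f a) (a : α) :
    f (a ⊔ f a) ≤ a ⊔ f a := by
  rw [hsup, hidem, sup_idem]
  exact le_sup_right

namespace WithBot

theorem finset_sup_add {ι M : Type*} [Add M] [LinearOrder M] [AddRightMono M]
    (s : Finset ι) (f : ι → WithBot M) (t : WithBot M) :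
    s.sup f + t = s.sup fun i => f i + t :=
  apply_sup_eq_sup_comp_of_linearOrder (· + t) (fun _ _ h => add_le_add_left h t) (bot_add t)

theorem coe_neg_add_cancel_left {G : Type*} [AddGroup G] (a : G) (b : WithBot G) :
    ((-a : G) : WithBot G) + (a + b) = b := by
  rw [← add_assoc, ← coe_add, neg_add_cancel, coe_zero, zero_add]

theorem coe_add_neg_cancel_left {G : Type*} [AddGroup G] (a : G) (b : WithBot G) :
    (a : WithBot G) + (((-a : G) : WithBot G) + b) = b := by
  simpa only [neg_neg] using coe_neg_add_cancel_left (-a) b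

theorem coe_add_le_iff_le_coe_neg_add {G : Type*} [AddCommGroup G] [LinearOrder G]
    [IsOrderedAddMonoid G] (a : G) {b c : WithBot G} :
    (a : WithBot G) + b ≤ c ↔ b ≤ ((-a : G) : WithBot G) + c where
  mp h := (coe_neg_add_cancel_left a b).symm.trans_le (add_le_add_right h _)
  mpr h := (add_le_add_right h _).trans_eq (coe_add_neg_cancel_left a c)

end WithBot

section MaxPlus

variable {G : Type*} [AddCommGroup G] [LinearOrder G] [IsOrderedAddMonoid G]
  {ι : Type*} [Fintype ι]

/-- The max-plus matrix `Δ⁻¹ 1 cᵀ` acting on vectors. -/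
def rankOneMap (c : ι → WithBot G) (Δ : G) (v : ι → WithBot G) : ι → WithBot G :=
  fun _ => ((-Δ : G) : WithBot G) + univ.sup fun j => c j + v j

theorem rankOneMap_sup (c : ι → WithBot G) (Δ : G) (v w : ι → WithBot G) :
    rankOneMap c Δ (v ⊔ w) = rankOneMap c Δ v ⊔ rankOneMap c Δ w := by
  funext i
  simp only [rankOneMap, Pi.sup_apply]
  rw [max_add_add_left, ← sup_sup]
  congr 2
  funext j
  exact (max_add_add_left _ _ _).symm

theorem rankOneMap_idem {c : ι → WithBot G} {Δ : G} (hΔ : (Δ : WithBot G) = univ.sup c)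
    (v : ι → WithBot G) : rankOneMap c Δ (rankOneMap c Δ v) = rankOneMap c Δ v := by
  funext i
  simp only [rankOneMap]
  rw [← WithBot.finset_sup_add, ← hΔ, WithBot.coe_add_neg_cancel_left]

theorem rankOneMap_le_iff_exists_eq_sup {c : ι → WithBot G} {Δ : G}
    (hΔ : (Δ : WithBot G) = univ.sup c) (x : ι → G) :
    rankOneMap c Δ (fun i => x i) ≤ (fun i => (x i : WithBot G)) ↔
      ∃ u : ι → G, ∀ i,
        (x i : WithBot G) = (u i : WithBot G) ⊔ rankOneMap c Δ (fun j => u j) i := by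
  constructor
  · exact fun h => ⟨x, fun i => (sup_eq_left.2 (h i)).symm⟩
  · rintro ⟨u, hu⟩
    rw [show (fun i => (x i : WithBot G)) = (fun i => (u i : WithBot G)) ⊔
      rankOneMap c Δ (fun j => u j) from funext hu]
    exact map_sup_map_le_sup_map (rankOneMap_sup c Δ) (rankOneMap_idem hΔ) _

theorem sup_add_sup_coe_neg_eq_iff {c : ι → WithBot G} {Δ : G}
    (hΔ : (Δ : WithBot G) = univ.sup c) (x : ι → G) :
    (univ.sup fun j => c j + x j) + (univ.sup fun k => ((-x k : G) : WithBot G)) = Δ ↔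
      rankOneMap c Δ (fun i => x i) ≤ (fun i => (x i : WithBot G)) := by
  set S := univ.sup fun j => c j + x j
  have hshift : ∀ k, S + ((-x k : G) : WithBot G) ≤ Δ ↔ ((-Δ : G) : WithBot G) + S ≤ x k := by
    intro k
    rw [add_comm, WithBot.coe_add_le_iff_le_coe_neg_add, neg_neg, add_comm,
      WithBot.coe_add_le_iff_le_coe_neg_add (-Δ), neg_neg]
  have hlower : (Δ : WithBot G) ≤ S + univ.sup fun k => ((-x k : G) : WithBot G) := by
    obtain ⟨j, -, hj⟩ := exists_mem_eq_of_sup_eq WithBot.coe_ne_bot hΔ.symm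
    calc (Δ : WithBot G) = (c j + x j) + ((-x j : G) : WithBot G) := by
          rw [hj, ← WithBot.coe_add, ← WithBot.coe_add, add_neg_cancel_right]
      _ ≤ _ := add_le_add (le_sup (f := fun j => c j + x j) (mem_univ j))
          (le_sup (f := fun k => ((-x k : G) : WithBot G)) (mem_univ j))
  constructor
  · intro h i
    change ((-Δ : G) : WithBot G) + S ≤ x i
    rw [← hshift, ← h]
    exact add_le_add_right (le_sup (f := fun k => ((-x k : G) : WithBot G)) (mem_univ i)) S
  · intro h
    refine le_antisymm ?_ hlower
    rw [add_comm, WithBot.finset_sup_add]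
    refine Finset.sup_le fun k _ => ?_
    rw [add_comm]
    exact (hshift k).2 (h k)

end MaxPlus

theorem stmt_9_general {n : ℕ} (C : Fin n → Fin n → WithBot ℝ) (Δ : ℝ)
    (hΔ : (Δ : WithBot ℝ) = Finset.univ.sup fun i => Finset.univ.sup fun j => C i j)
    (x : Fin n → ℝ) :
    makespan C x = (Δ : WithBot ℝ) ↔
      ∃ u : Fin n → ℝ, ∀ i,
        ((x i : ℝ) : WithBot ℝ) =
          ((u i : ℝ) : WithBot ℝ) ⊔
            (((-Δ : ℝ) : WithBot ℝ) +
              Finset.univ.sup fun j =>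
                (Finset.univ.sup fun k => C k j) + ((u j : ℝ) : WithBot ℝ)) := by
  have hc : (Δ : WithBot ℝ) = univ.sup fun j => univ.sup fun k => C k j :=
    hΔ.trans (Finset.sup_comm _ _ _)
  have hF : makespan C x = (univ.sup fun j => (univ.sup fun k => C k j) + x j) +
      univ.sup fun k => ((-x k : ℝ) : WithBot ℝ) := by
    simp only [makespan, WithBot.finset_sup_add]
    rw [Finset.sup_comm]
  rw [hF]
  exact (sup_add_sup_coe_neg_eq_iff hc x).trans (rankOneMap_le_iff_exists_eq_sup hc x)

/-- All solutions of the minimum-makespan problem under start-finish constraints: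
F(x) = Δ iff x = (I ⊕ Δ⁻¹11ᵀC)u for some u ∈ ℝⁿ, i.e.
x_i = max(u_i, −Δ + max_j((max_k C_{kj}) + u_j)). -/
theorem stmt_9 {n : ℕ} (hn : 0 < n) (C : Fin n → Fin n → WithBot ℝ)
    (hC : ∀ i, ∃ j, C i j ≠ ⊥) (Δ : ℝ)
    (hΔ : (Δ : WithBot ℝ) = Finset.univ.sup fun i => Finset.univ.sup fun j => C i j)
    (x : Fin n → ℝ) :
    makespan C x = (Δ : WithBot ℝ) ↔
      ∃ u : Fin n → ℝ, ∀ i,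
        ((x i : ℝ) : WithBot ℝ) =
          ((u i : ℝ) : WithBot ℝ) ⊔
            (((-Δ : ℝ) : WithBot ℝ) +
              Finset.univ.sup fun j =>
                (Finset.univ.sup fun k => C k j) + ((u j : ℝ) : WithBot ℝ)) :=
  stmt_9_general C Δ hΔ x
end

section
/- Let C be an n×n matrix over ℝ∪{−∞} that is regular (every row and every column contains a real entry), f ∈ ℝⁿ, and g ∈ (ℝ∪{−∞})ⁿ such that max_{1≤i,j≤n}( C_{ij} + g_j − f_i ) ≤ 0. Then the minimum over all x ∈ ℝⁿ satisfying max_{1≤j≤n}(C_{ij} + x_j) ≤ f_i and g_i ≤ x_i for all i, of F(x) = (max_{1≤i,j≤n}(C_{ij} + x_j)) + (max_{1≤k≤n}(−x_k)), equals θ = max( max_{i,j} C_{ij} , (max_{i,j}(C_{ij} + g_j)) + (max_{i,j}(C_{ij} − f_i)) ), and this minimum is attained by some feasible x. -/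
/-!
Write `α = max_{i,j}(C_{ij} − f_i)`, a real number because `C` has a real entry. For a feasible
`x` the makespan `S + T`, with `S = max_{i,j}(C_{ij} + x_j)` and `T = max_k(−x_k)`, is at least
`max_{i,j} C_{ij}` (as `C_{ij} = (C_{ij} + x_j) + (−x_j)`), and at least `‖Cg‖ + α`, because
`g ≤ x` gives `‖Cg‖ ≤ S` while `C_{ij} + x_j ≤ f_i` gives `α ≤ T`. Conversely the schedule
`x = g ⊔ (−α)` is feasible (its two branches are bounded by `f` through the hypothesis on `g` and
through the definition of `α`), has `T ≤ α`, and `C_{ij} + x_j + α ≤ θ`, so it attains `θ`.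
-/

open Finset

namespace MaxPlus

section Cancel

variable {G : Type*} [AddGroup G]

theorem add_coe_add_coe_neg (t : WithBot G) (r : G) :
    t + (r : WithBot G) + ((-r : G) : WithBot G) = t := by
  induction t using WithBot.recBotCoe with
  | bot => simp
  | coe c => norm_cast; exact add_neg_cancel_right c r

theorem add_coe_neg_add_coe (t : WithBot G) (r : G) :
    t + ((-r : G) : WithBot G) + (r : WithBot G) = t := by
  simpa only [neg_neg] using add_coe_add_coe_neg t (-r)

end Cancel

section Shift

variable {G : Type*} [AddCommGroup G] [LinearOrder G] [IsOrderedAddMonoid G]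

theorem add_coe_le_iff (t m : WithBot G) (r : G) :
    t + (r : WithBot G) ≤ m ↔ t ≤ m + ((-r : G) : WithBot G) := by
  constructor
  · intro h
    simpa only [add_coe_add_coe_neg] using add_le_add_left h ((-r : G) : WithBot G)
  · intro h
    simpa only [add_coe_neg_add_coe] using add_le_add_left h (r : WithBot G)

theorem add_coe_le_coe_iff (t : WithBot G) (r s : G) :
    t + (r : WithBot G) ≤ s ↔ t ≤ ((s - r : G) : WithBot G) := by
  rw [add_coe_le_iff, ← WithBot.coe_add, sub_eq_add_neg]

end Shift

section MaxEntry

variable {ι κ α : Type*} [Fintype ι] [Fintype κ] [SemilatticeSup α] [OrderBot α]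

/-- The max-plus norm `‖A‖ = max_{i,j} A_{ij}`. -/
def maxEntry (A : ι → κ → α) : α :=
  univ.sup fun i => univ.sup fun j => A i j

theorem le_maxEntry (A : ι → κ → α) (i : ι) (j : κ) : A i j ≤ maxEntry A :=
  (le_sup (f := A i) (mem_univ j)).trans (le_sup (f := fun i => univ.sup (A i)) (mem_univ i))

theorem maxEntry_le_iff {A : ι → κ → α} {a : α} : maxEntry A ≤ a ↔ ∀ i j, A i j ≤ a := by
  simp only [maxEntry, Finset.sup_le_iff, mem_univ, true_imp_iff]

end MaxEntry

section Schedule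

variable {n : ℕ} (C : Fin n → Fin n → WithBot ℝ) (f : Fin n → ℝ) (g : Fin n → WithBot ℝ)

def IsFeasible (x : Fin n → ℝ) : Prop :=
  ∀ i, (univ.sup fun j => C i j + ((x j : ℝ) : WithBot ℝ)) ≤ ((f i : ℝ) : WithBot ℝ) ∧
    g i ≤ ((x i : ℝ) : WithBot ℝ)

/-- The value `θ = ‖C‖ ⊕ ‖Cg‖ ⊗ ‖f⁻C‖`. -/
noncomputable def minMakespan : WithBot ℝ :=
  maxEntry C ⊔
    (maxEntry (fun i j => C i j + g j) + maxEntry fun i j => C i j + ((-(f i) : ℝ) : WithBot ℝ))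

variable {C f g}

theorem IsFeasible.add_le {x : Fin n → ℝ} (hx : IsFeasible C f g x) (i j : Fin n) :
    C i j + ((x j : ℝ) : WithBot ℝ) ≤ ((f i : ℝ) : WithBot ℝ) :=
  (le_sup (f := fun j => C i j + ((x j : ℝ) : WithBot ℝ)) (mem_univ j)).trans (hx i).1

theorem maxEntry_le_makespan (x : Fin n → ℝ) : maxEntry C ≤ makespan C x :=
  maxEntry_le_iff.2 fun i j =>
    calc C i j = C i j + ((x j : ℝ) : WithBot ℝ) + ((-(x j) : ℝ) : WithBot ℝ) :=
          (add_coe_add_coe_neg _ _).symm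
      _ ≤ makespan C x :=
          add_le_add (le_maxEntry (fun i j => C i j + ((x j : ℝ) : WithBot ℝ)) i j)
            (le_sup (f := fun k => ((-(x k) : ℝ) : WithBot ℝ)) (mem_univ j))

theorem minMakespan_le_makespan {x : Fin n → ℝ} (hx : IsFeasible C f g x) :
    minMakespan C f g ≤ makespan C x := by
  refine sup_le (maxEntry_le_makespan x) (add_le_add ?_ ?_)
  · exact maxEntry_le_iff.2 fun i j =>
      (add_le_add_right (hx j).2 _).trans
        (le_maxEntry (fun i j => C i j + ((x j : ℝ) : WithBot ℝ)) i j)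
  · refine maxEntry_le_iff.2 fun i j =>
      le_trans ?_ (le_sup (f := fun k => ((-(x k) : ℝ) : WithBot ℝ)) (mem_univ j))
    have h := (add_coe_le_coe_iff _ _ _).1 (hx.add_le i j)
    rwa [add_coe_le_coe_iff, show -x j - -f i = f i - x j by ring]

variable {a : ℝ} {x : Fin n → ℝ}

theorem isFeasible_of_coe_eq_sup
    (hfg : maxEntry (fun i j => C i j + g j + ((-(f i) : ℝ) : WithBot ℝ)) ≤ 0)
    (ha : (a : WithBot ℝ) = maxEntry fun i j => C i j + ((-(f i) : ℝ) : WithBot ℝ))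
    (hx : ∀ j, ((x j : ℝ) : WithBot ℝ) = g j ⊔ ((-a : ℝ) : WithBot ℝ)) :
    IsFeasible C f g x := by
  refine fun i => ⟨Finset.sup_le fun j _ => ?_, (hx i).ge.trans' le_sup_left⟩
  rw [hx j, ← max_add_add_left]
  refine max_le ?_ ?_
  · have h := le_maxEntry _ i j |>.trans hfg
    rwa [add_coe_le_iff, zero_add, neg_neg] at h
  · have h := (le_maxEntry (fun i j => C i j + ((-(f i) : ℝ) : WithBot ℝ)) i j).trans ha.ge
    rw [add_coe_le_iff, neg_neg] at h ⊢
    rwa [← WithBot.coe_add, add_comm]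

theorem makespan_le_minMakespan
    (ha : (a : WithBot ℝ) = maxEntry fun i j => C i j + ((-(f i) : ℝ) : WithBot ℝ))
    (hx : ∀ j, ((x j : ℝ) : WithBot ℝ) = g j ⊔ ((-a : ℝ) : WithBot ℝ)) :
    makespan C x ≤ minMakespan C f g := by
  have hT : (univ.sup fun k => ((-(x k) : ℝ) : WithBot ℝ)) ≤ (a : WithBot ℝ) :=
    Finset.sup_le fun k _ => by
      have h : ((-a : ℝ) : WithBot ℝ) ≤ x k := (hx k).ge.trans' le_sup_right
      exact_mod_cast neg_le.1 (WithBot.coe_le_coe.1 h)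
  have hS : maxEntry (fun i j => C i j + ((x j : ℝ) : WithBot ℝ)) ≤
      minMakespan C f g + ((-a : ℝ) : WithBot ℝ) := by
    refine maxEntry_le_iff.2 fun i j => (add_coe_le_iff _ _ _).1 ?_
    rw [hx j, ← max_add_add_left, ← max_add_add_right]
    refine max_le ?_ ?_
    · rw [ha]
      exact le_sup_of_le_right (add_le_add_left (le_maxEntry (fun i j => C i j + g j) i j) _)
    · rw [add_coe_neg_add_coe]
      exact le_sup_of_le_left (le_maxEntry C i j)
  calc makespan C x ≤ minMakespan C f g + ((-a : ℝ) : WithBot ℝ) + (a : WithBot ℝ) :=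
        add_le_add hS hT
    _ = minMakespan C f g := add_coe_neg_add_coe _ a

end Schedule

end MaxPlus

open MaxPlus in
theorem stmt_10_general {n : ℕ} (hn : 0 < n) (C : Fin n → Fin n → WithBot ℝ)
    (hCrow : ∀ i, ∃ j, C i j ≠ ⊥)
    (f : Fin n → ℝ) (g : Fin n → WithBot ℝ)
    (hfg : (Finset.univ.sup fun i => Finset.univ.sup fun j =>
        C i j + g j + ((-(f i) : ℝ) : WithBot ℝ)) ≤ 0) :
    ∃ θ : ℝ,
      ((θ : WithBot ℝ) =
        (Finset.univ.sup fun i => Finset.univ.sup fun j => C i j) ⊔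
          ((Finset.univ.sup fun i => Finset.univ.sup fun j => C i j + g j) +
            (Finset.univ.sup fun i => Finset.univ.sup fun j =>
              C i j + ((-(f i) : ℝ) : WithBot ℝ)))) ∧
      IsLeast
        {v | ∃ x : Fin n → ℝ,
          (∀ i, (Finset.univ.sup fun j => C i j + ((x j : ℝ) : WithBot ℝ)) ≤
              ((f i : ℝ) : WithBot ℝ) ∧
            g i ≤ ((x i : ℝ) : WithBot ℝ)) ∧
          makespan C x = v}
        (θ : WithBot ℝ) := by
  let i₀ : Fin n := ⟨0, hn⟩
  obtain ⟨j₀, hj₀⟩ := hCrow i₀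
  obtain ⟨a, ha⟩ :
      ∃ a : ℝ, (a : WithBot ℝ) = maxEntry fun i j => C i j + ((-(f i) : ℝ) : WithBot ℝ) :=
    WithBot.ne_bot_iff_exists.1 <| ne_bot_of_le_ne_bot
      (WithBot.add_ne_bot.2 ⟨hj₀, WithBot.coe_ne_bot⟩)
      (le_maxEntry (fun i j => C i j + ((-(f i) : ℝ) : WithBot ℝ)) i₀ j₀)
  obtain ⟨θ, hθ⟩ : ∃ θ : ℝ, (θ : WithBot ℝ) = minMakespan C f g :=
    WithBot.ne_bot_iff_exists.1 <| ne_bot_of_le_ne_bot hj₀ <|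
      (le_maxEntry C i₀ j₀).trans le_sup_left
  choose x₀ hx₀ using fun j =>
    WithBot.ne_bot_iff_exists.1 <| ne_bot_of_le_ne_bot (WithBot.coe_ne_bot (a := -a))
      (le_sup_right (a := g j))
  have hfeas : IsFeasible C f g x₀ := isFeasible_of_coe_eq_sup hfg ha hx₀
  refine ⟨θ, hθ, ⟨x₀, hfeas, ?_⟩, ?_⟩
  · exact le_antisymm (hθ ▸ makespan_le_minMakespan ha hx₀) (hθ ▸ minMakespan_le_makespan hfeas)
  · rintro v ⟨x, hx, rfl⟩
    exact hθ ▸ minMakespan_le_makespan hx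

/-- Scheduling under start-finish, late-finish (due date, Cx ≤ f) and early-start
(g ≤ x) constraints: the minimum makespan equals
θ = max(max_{i,j} C_{ij}, (max_{i,j}(C_{ij} + g_j)) + (max_{i,j}(C_{ij} − f_i))),
and it is attained by some feasible x. -/
theorem stmt_10 {n : ℕ} (hn : 0 < n) (C : Fin n → Fin n → WithBot ℝ)
    (hCrow : ∀ i, ∃ j, C i j ≠ ⊥) (hCcol : ∀ j, ∃ i, C i j ≠ ⊥)
    (f : Fin n → ℝ) (g : Fin n → WithBot ℝ)
    (hfg : (Finset.univ.sup fun i => Finset.univ.sup fun j =>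
        C i j + g j + ((-(f i) : ℝ) : WithBot ℝ)) ≤ 0) :
    ∃ θ : ℝ,
      ((θ : WithBot ℝ) =
        (Finset.univ.sup fun i => Finset.univ.sup fun j => C i j) ⊔
          ((Finset.univ.sup fun i => Finset.univ.sup fun j => C i j + g j) +
            (Finset.univ.sup fun i => Finset.univ.sup fun j =>
              C i j + ((-(f i) : ℝ) : WithBot ℝ)))) ∧
      IsLeast
        {v | ∃ x : Fin n → ℝ,
          (∀ i, (Finset.univ.sup fun j => C i j + ((x j : ℝ) : WithBot ℝ)) ≤
              ((f i : ℝ) : WithBot ℝ) ∧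
            g i ≤ ((x i : ℝ) : WithBot ℝ)) ∧
          makespan C x = v}
        (θ : WithBot ℝ) :=
  stmt_10_general hn C hCrow f g hfg
end

section
/- Let C be a regular n×n matrix over ℝ∪{−∞}, f ∈ ℝⁿ, g ∈ (ℝ∪{−∞})ⁿ with max_{i,j}(C_{ij} + g_j − f_i) ≤ 0, and let θ = max( max_{i,j} C_{ij} , (max_{i,j}(C_{ij}+g_j)) + (max_{i,j}(C_{ij}−f_i)) ). Set c̄_j = max_{1≤k≤n} C_{kj} and r_j = max_{1≤i≤n}(C_{ij} − f_i). Then x ∈ ℝⁿ is a feasible minimizer — i.e. max_j(C_{ij}+x_j) ≤ f_i and g_i ≤ x_i for all i, and F(x) = θ — if and only if there exists u ∈ ℝⁿ with x_i = max( u_i , −θ + max_{1≤j≤n}(c̄_j + u_j) ) for all i, and g_j ≤ u_j ≤ −max( r_j , (max_{1≤k≤n} r_k) − θ + c̄_j ) for all j. -/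
/-- Column maxima of C: cbar_j = max_k C_{kj}. -/
noncomputable def cbar {n : ℕ} (C : Fin n → Fin n → WithBot ℝ) (j : Fin n) : WithBot ℝ :=
  Finset.univ.sup fun k => C k j

/-- r_j = max_i (C_{ij} − f_i), the j-th entry of f⁻C. -/
noncomputable def rvec {n : ℕ} (C : Fin n → Fin n → WithBot ℝ) (f : Fin n → ℝ)
    (j : Fin n) : WithBot ℝ :=
  Finset.univ.sup fun i => C i j + ((-(f i) : ℝ) : WithBot ℝ)

open Finset

namespace WithBot

section Shift

variable {G : Type*} [AddGroup G] [LE G] [AddRightMono G] [AddRightReflectLE G]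

theorem add_coe_le_iff (a b : WithBot G) (t : G) :
    a + t ≤ b ↔ a ≤ b + ((-t : G) : WithBot G) := by
  rw [← WithBot.add_le_add_iff_right (WithBot.coe_ne_bot (a := -t)), add_assoc,
    ← WithBot.coe_add, add_neg_cancel, WithBot.coe_zero, add_zero]

theorem add_coe_le_coe_iff_of_sub_eq (a : WithBot G) {s t s' t' : G} (h : t - s = t' - s') :
    a + s ≤ t ↔ a + s' ≤ t' := by
  simp only [add_coe_le_iff, ← WithBot.coe_add, ← sub_eq_add_neg, h]

end Shift

theorem add_finset_sup_le_iff {ι α : Type*} [Add α] [LinearOrder α] [AddLeftMono α]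
    {s : Finset ι} {f : ι → WithBot α} {a b : WithBot α} :
    a + s.sup f ≤ b ↔ ∀ i ∈ s, a + f i ≤ b := by
  rcases s.eq_empty_or_nonempty with rfl | hs
  · simp
  obtain ⟨i, hi, hsup⟩ := s.exists_mem_eq_sup hs f
  refine ⟨fun h k hk => le_trans ?_ h, fun h => hsup ▸ h i hi⟩
  gcongr
  exact le_sup hk

end WithBot

open WithBot

section Makespan

variable {n : ℕ} (C : Fin n → Fin n → WithBot ℝ) (f : Fin n → ℝ) (g : Fin n → WithBot ℝ)

/-- `c̄ᵀy`, the latest completion time under the start times `y`. -/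
noncomputable def lastCompletion (y : Fin n → ℝ) : WithBot ℝ :=
  univ.sup fun j => cbar C j + ((y j : ℝ) : WithBot ℝ)

def IsFeasible (x : Fin n → ℝ) : Prop :=
  ∀ i, (univ.sup fun j => C i j + ((x j : ℝ) : WithBot ℝ)) ≤ ((f i : ℝ) : WithBot ℝ) ∧
    g i ≤ ((x i : ℝ) : WithBot ℝ)

/-- `(I ⊕ θ⁻¹11ᵀC)u`. -/
noncomputable def paramStart (θ : ℝ) (u : Fin n → ℝ) (i : Fin n) : WithBot ℝ :=
  ((u i : ℝ) : WithBot ℝ) ⊔ (((-θ : ℝ) : WithBot ℝ) + lastCompletion C u)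

/-- `f⁻C(I ⊕ θ⁻¹11ᵀC)`, whose conjugate bounds the parameter `u` from above. -/
noncomputable def rvecParam (θ : ℝ) (j : Fin n) : WithBot ℝ :=
  rvec C f j ⊔ (univ.sup (rvec C f) + ((-θ : ℝ) : WithBot ℝ) + cbar C j)

/-- The paper's `θ`. -/
noncomputable def minMakespan : WithBot ℝ :=
  (univ.sup fun i => univ.sup fun j => C i j) ⊔
    ((univ.sup fun i => univ.sup fun j => C i j + g j) +
      (univ.sup fun i => univ.sup fun j => C i j + ((-(f i) : ℝ) : WithBot ℝ)))

theorem cbar_add_coe_le_iff (j : Fin n) (t : ℝ) (b : WithBot ℝ) :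
    cbar C j + (t : WithBot ℝ) ≤ b ↔ ∀ k, C k j + (t : WithBot ℝ) ≤ b := by
  simp only [add_coe_le_iff, cbar, Finset.sup_le_iff, mem_univ, true_implies]

theorem sup_sup_add_coe_eq_lastCompletion (y : Fin n → ℝ) :
    (univ.sup fun i => univ.sup fun j => C i j + ((y j : ℝ) : WithBot ℝ)) =
      lastCompletion C y :=
  eq_of_forall_ge_iff fun b => by
    simp only [lastCompletion, Finset.sup_le_iff, mem_univ, true_implies, cbar_add_coe_le_iff]
    exact forall_comm

theorem makespan_eq_lastCompletion_add (x : Fin n → ℝ) :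
    makespan C x = lastCompletion C x + univ.sup fun k => ((-(x k) : ℝ) : WithBot ℝ) := by
  rw [makespan, sup_sup_add_coe_eq_lastCompletion]

theorem cbar_add_coe_le_lastCompletion (y : Fin n → ℝ) (j : Fin n) :
    cbar C j + ((y j : ℝ) : WithBot ℝ) ≤ lastCompletion C y :=
  le_sup (f := fun j => cbar C j + ((y j : ℝ) : WithBot ℝ)) (mem_univ j)

theorem rvec_le_coe_neg_iff (j : Fin n) (t : ℝ) :
    rvec C f j ≤ ((-t : ℝ) : WithBot ℝ) ↔
      ∀ i, C i j + (t : WithBot ℝ) ≤ (f i : WithBot ℝ) := by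
  simp only [rvec, Finset.sup_le_iff, mem_univ, true_implies]
  exact forall_congr' fun i => add_coe_le_coe_iff_of_sub_eq _ (by ring)

theorem sup_rvec_eq :
    univ.sup (rvec C f) =
      univ.sup fun i => univ.sup fun j => C i j + ((-(f i) : ℝ) : WithBot ℝ) :=
  Finset.sup_comm _ _ _

theorem le_minMakespan (i j : Fin n) : C i j ≤ minMakespan C f g :=
  le_sup_of_le_left <| le_sup_of_le (mem_univ i) <| le_sup (f := C i) (mem_univ j)

theorem cbar_le_minMakespan (j : Fin n) : cbar C j ≤ minMakespan C f g :=
  Finset.sup_le fun i _ => le_minMakespan C f g i j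

variable {C f g}

theorem IsFeasible.rvec_le {x : Fin n → ℝ} (hx : IsFeasible C f g x) (j : Fin n) :
    rvec C f j ≤ ((-(x j) : ℝ) : WithBot ℝ) :=
  (rvec_le_coe_neg_iff C f j (x j)).2 fun i =>
    le_trans (le_sup (f := fun j => C i j + ((x j : ℝ) : WithBot ℝ)) (mem_univ j)) (hx i).1

theorem IsFeasible.minMakespan_le {x : Fin n → ℝ} (hx : IsFeasible C f g x) :
    minMakespan C f g ≤ makespan C x := by
  have hT : ∀ j,
      ((-(x j) : ℝ) : WithBot ℝ) ≤ univ.sup fun k => ((-(x k) : ℝ) : WithBot ℝ) :=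
    fun j => le_sup (f := fun k => ((-(x k) : ℝ) : WithBot ℝ)) (mem_univ j)
  have hS : ∀ i j, C i j + ((x j : ℝ) : WithBot ℝ) ≤
      univ.sup fun i => univ.sup fun j => C i j + ((x j : ℝ) : WithBot ℝ) := fun i j =>
    le_sup_of_le (mem_univ i)
      (le_sup (f := fun j => C i j + ((x j : ℝ) : WithBot ℝ)) (mem_univ j))
  refine sup_le (Finset.sup_le fun i _ => Finset.sup_le fun j _ => ?_) (add_le_add ?_ ?_)
  · calc C i j = C i j + ((x j : ℝ) : WithBot ℝ) + ((-(x j) : ℝ) : WithBot ℝ) := by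
          rw [add_assoc, ← WithBot.coe_add, add_neg_cancel, WithBot.coe_zero, add_zero]
      _ ≤ makespan C x := add_le_add (hS i j) (hT j)
  · exact Finset.sup_le fun i _ => Finset.sup_le fun j _ =>
      le_trans (add_le_add_right (hx j).2 _) (hS i j)
  · rw [← sup_rvec_eq]
    exact Finset.sup_le fun j _ => le_trans (hx.rvec_le j) (hT j)

theorem rvecParam_le_coe_neg_iff (θ : ℝ) (j : Fin n) (t : ℝ) :
    rvecParam C f θ j ≤
        ((-t : ℝ) : WithBot ℝ) ↔
      (∀ i, C i j + (t : WithBot ℝ) ≤ (f i : WithBot ℝ)) ∧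
        univ.sup (rvec C f) + (cbar C j + (t : WithBot ℝ)) ≤ (θ : WithBot ℝ) := by
  rw [rvecParam, sup_le_iff, rvec_le_coe_neg_iff, add_right_comm, ← add_assoc]
  exact and_congr_right' (add_coe_le_coe_iff_of_sub_eq _ (by ring))

theorem IsFeasible.rvecParam_le_of_makespan_le {x : Fin n → ℝ} (hx : IsFeasible C f g x)
    {θ : ℝ} (hmk : makespan C x ≤ θ) (j : Fin n) :
    rvecParam C f θ j ≤
      ((-(x j) : ℝ) : WithBot ℝ) := by
  refine (rvecParam_le_coe_neg_iff θ j (x j)).2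
    ⟨(rvec_le_coe_neg_iff C f j (x j)).1 (hx.rvec_le j), ?_⟩
  calc univ.sup (rvec C f) + (cbar C j + ((x j : ℝ) : WithBot ℝ))
      ≤ (univ.sup fun k => ((-(x k) : ℝ) : WithBot ℝ)) + lastCompletion C x :=
        add_le_add (Finset.sup_mono_fun fun k _ => hx.rvec_le k)
          (cbar_add_coe_le_lastCompletion C x j)
    _ = makespan C x := by rw [makespan_eq_lastCompletion_add, add_comm]
    _ ≤ θ := hmk

theorem coe_neg_add_lastCompletion_le {x : Fin n → ℝ} {θ : ℝ} (hmk : makespan C x ≤ θ)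
    (i : Fin n) : ((-θ : ℝ) : WithBot ℝ) + lastCompletion C x ≤ (x i : WithBot ℝ) := by
  rw [add_comm, add_coe_le_coe_iff_of_sub_eq _ (s' := -(x i)) (t' := θ) (by ring)]
  refine le_trans ?_ ((makespan_eq_lastCompletion_add C x).symm.trans_le hmk)
  gcongr
  exact le_sup (f := fun k => ((-(x k) : ℝ) : WithBot ℝ)) (mem_univ i)

section Parametrization

variable {θ : ℝ} {u x : Fin n → ℝ}

theorem isFeasible_of_eq_paramStart
    (hx : ∀ i, (x i : WithBot ℝ) = paramStart C θ u i)
    (hg : ∀ j, g j ≤ (u j : WithBot ℝ))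
    (hu : ∀ j, rvecParam C f θ j ≤ ((-(u j) : ℝ) : WithBot ℝ)) :
    IsFeasible C f g x := by
  have hu' := fun j => (rvecParam_le_coe_neg_iff θ j (u j)).1 (hu j)
  have hR : univ.sup (rvec C f) + lastCompletion C u ≤ θ :=
    add_finset_sup_le_iff.2 fun j _ => (hu' j).2
  refine fun i => ⟨Finset.sup_le fun j _ => ?_, (hg i).trans (hx i ▸ le_sup_left)⟩
  rw [hx j, paramStart, add_max]
  refine max_le ((hu' j).1 i) ?_
  rw [add_left_comm, add_comm,
    add_coe_le_coe_iff_of_sub_eq _ (s' := -(f i)) (t' := θ) (by ring), add_right_comm]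
  calc C i j + ((-(f i) : ℝ) : WithBot ℝ) + lastCompletion C u
      ≤ univ.sup (rvec C f) + lastCompletion C u := by
        gcongr
        exact le_sup_of_le (mem_univ j)
          (le_sup (f := fun i => C i j + ((-(f i) : ℝ) : WithBot ℝ)) (mem_univ i))
    _ ≤ θ := hR

theorem lastCompletion_le_of_eq_paramStart
    (hx : ∀ i, (x i : WithBot ℝ) = paramStart C θ u i)
    (hcθ : ∀ j, cbar C j ≤ θ) :
    lastCompletion C x ≤ lastCompletion C u := by
  refine Finset.sup_le fun j _ => ?_
  rw [hx j, paramStart, add_max]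
  refine max_le (cbar_add_coe_le_lastCompletion C u j) ?_
  calc cbar C j + (((-θ : ℝ) : WithBot ℝ) + lastCompletion C u)
      = cbar C j + ((-θ : ℝ) : WithBot ℝ) + lastCompletion C u := (add_assoc _ _ _).symm
    _ ≤ 0 + lastCompletion C u := by
        gcongr
        exact (add_coe_le_iff _ _ _).2 (by simpa using hcθ j)
    _ = lastCompletion C u := zero_add _

theorem makespan_le_of_eq_paramStart
    (hx : ∀ i, (x i : WithBot ℝ) = paramStart C θ u i)
    (hcθ : ∀ j, cbar C j ≤ θ) : makespan C x ≤ θ := by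
  rw [makespan_eq_lastCompletion_add]
  refine add_finset_sup_le_iff.2 fun k _ =>
    le_trans (add_le_add_left (lastCompletion_le_of_eq_paramStart hx hcθ) _) ?_
  rw [add_coe_le_coe_iff_of_sub_eq _ (s' := -θ) (t' := x k) (by ring), add_comm, hx k, paramStart]
  exact le_sup_right

end Parametrization

end Makespan

theorem stmt_11_general {n : ℕ} (C : Fin n → Fin n → WithBot ℝ)
    (f : Fin n → ℝ) (g : Fin n → WithBot ℝ)
    (θ : ℝ)
    (hθ : (θ : WithBot ℝ) =
      (Finset.univ.sup fun i => Finset.univ.sup fun j => C i j) ⊔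
        ((Finset.univ.sup fun i => Finset.univ.sup fun j => C i j + g j) +
          (Finset.univ.sup fun i => Finset.univ.sup fun j =>
            C i j + ((-(f i) : ℝ) : WithBot ℝ))))
    (x : Fin n → ℝ) :
    ((∀ i, (Finset.univ.sup fun j => C i j + ((x j : ℝ) : WithBot ℝ)) ≤
        ((f i : ℝ) : WithBot ℝ) ∧
      g i ≤ ((x i : ℝ) : WithBot ℝ)) ∧
      makespan C x = (θ : WithBot ℝ)) ↔
      ∃ u : Fin n → ℝ,
        (∀ i, ((x i : ℝ) : WithBot ℝ) =
          ((u i : ℝ) : WithBot ℝ) ⊔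
            (((-θ : ℝ) : WithBot ℝ) +
              Finset.univ.sup fun j => cbar C j + ((u j : ℝ) : WithBot ℝ))) ∧
        (∀ j, g j ≤ ((u j : ℝ) : WithBot ℝ) ∧
          (rvec C f j ⊔
            ((Finset.univ.sup fun k => rvec C f k) + ((-θ : ℝ) : WithBot ℝ) + cbar C j)) ≤
            ((-(u j) : ℝ) : WithBot ℝ)) := by
  have hθ' : (θ : WithBot ℝ) = minMakespan C f g := hθ
  constructor
  · rintro ⟨hx, hmk⟩
    exact ⟨x, fun i => (sup_eq_left.2 (coe_neg_add_lastCompletion_le hmk.le i)).symm,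
      fun j => ⟨(hx j).2, IsFeasible.rvecParam_le_of_makespan_le hx hmk.le j⟩⟩
  · rintro ⟨u, hxu, hu⟩
    have hx : IsFeasible C f g x :=
      isFeasible_of_eq_paramStart hxu (fun j => (hu j).1) (fun j => (hu j).2)
    have hcθ : ∀ j, cbar C j ≤ θ := fun j => hθ' ▸ cbar_le_minMakespan C f g j
    exact ⟨hx, le_antisymm (makespan_le_of_eq_paramStart hxu hcθ) (hθ' ▸ hx.minMakespan_le)⟩

/-- Characterization of the feasible minimizers of the makespan under late-finish and
early-start constraints: x = (I ⊕ θ⁻¹11ᵀC)u with g ≤ u ≤ (f⁻C(I ⊕ θ⁻¹11ᵀC))⁻. -/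
theorem stmt_11 {n : ℕ} (hn : 0 < n) (C : Fin n → Fin n → WithBot ℝ)
    (hCrow : ∀ i, ∃ j, C i j ≠ ⊥) (hCcol : ∀ j, ∃ i, C i j ≠ ⊥)
    (f : Fin n → ℝ) (g : Fin n → WithBot ℝ)
    (hfg : (Finset.univ.sup fun i => Finset.univ.sup fun j =>
        C i j + g j + ((-(f i) : ℝ) : WithBot ℝ)) ≤ 0)
    (θ : ℝ)
    (hθ : (θ : WithBot ℝ) =
      (Finset.univ.sup fun i => Finset.univ.sup fun j => C i j) ⊔
        ((Finset.univ.sup fun i => Finset.univ.sup fun j => C i j + g j) +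
          (Finset.univ.sup fun i => Finset.univ.sup fun j =>
            C i j + ((-(f i) : ℝ) : WithBot ℝ))))
    (x : Fin n → ℝ) :
    ((∀ i, (Finset.univ.sup fun j => C i j + ((x j : ℝ) : WithBot ℝ)) ≤
        ((f i : ℝ) : WithBot ℝ) ∧
      g i ≤ ((x i : ℝ) : WithBot ℝ)) ∧
      makespan C x = (θ : WithBot ℝ)) ↔
      ∃ u : Fin n → ℝ,
        (∀ i, ((x i : ℝ) : WithBot ℝ) =
          ((u i : ℝ) : WithBot ℝ) ⊔
            (((-θ : ℝ) : WithBot ℝ) +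
              Finset.univ.sup fun j => cbar C j + ((u j : ℝ) : WithBot ℝ))) ∧
        (∀ j, g j ≤ ((u j : ℝ) : WithBot ℝ) ∧
          (rvec C f j ⊔
            ((Finset.univ.sup fun k => rvec C f k) + ((-θ : ℝ) : WithBot ℝ) + cbar C j)) ≤
            ((-(u j) : ℝ) : WithBot ℝ)) :=
  stmt_11_general C f g θ hθ x
end

section
/- Let C and D be n×n matrices over ℝ∪{−∞} and let DC denote their max-plus product, (DC)_{ij} = max_{1≤k≤n}(D_{ik} + C_{kj}). Assume Tr(DC) ≤ 0 (every cyclic sequence in DC of length m ≤ n has total weight ≤ 0) and let g ∈ (ℝ∪{−∞})ⁿ. Then the minimum over all x ∈ ℝⁿ satisfying, for every i, max( max_{1≤j≤n}((DC)_{ij} + x_j) , g_i ) ≤ x_i, of F(x) = (max_{1≤i,j≤n}(C_{ij} + x_j)) + (max_{1≤k≤n}(−x_k)), equals θ = max_{1≤i,j≤n}( max_{1≤k≤n}( C_{ik} + ((DC)*)_{kj} ) ), i.e. θ = ‖C(DC)*‖, and this minimum is attained by some feasible x. -/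
/-!
For `A = DC`, a feasible `x` satisfies `A x ≤ x`, hence `A* x ≤ x`, i.e. `(A*)ₖⱼ ≤ xₖ - xⱼ`, and
adding `Cᵢₖ` gives `θ ≤ F(x)`. Conversely, a walk of length `n` revisits a vertex, and since
`Tr A ≤ 0` cutting out the cycle in between does not decrease its weight; so `Aⁿ ≤ A*` and
`A A* ≤ A*`. The row maxima `x⁰ = A* ⊗ 0` therefore satisfy `A x⁰ ≤ x⁰`, `x⁰ ≥ 0` and
`F(x⁰) ≤ θ`. As `F` is invariant under adding a constant to `x`, shifting `x⁰` up until it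
dominates `g` gives a feasible point with `F = θ`.
-/

namespace MaxPlus

open Finset

section Sup

variable {ι α : Type*} [AddCommMonoid α] [LinearOrder α] [IsOrderedAddMonoid α]

theorem finsetSup_add (s : Finset ι) (f : ι → WithBot α) (c : WithBot α) :
    s.sup f + c = s.sup fun a => f a + c :=
  apply_sup_eq_sup_comp_of_linearOrder (· + c) (fun _ _ h => add_le_add h le_rfl)
    (WithBot.bot_add c)

theorem add_finsetSup (s : Finset ι) (f : ι → WithBot α) (c : WithBot α) :
    c + s.sup f = s.sup fun a => c + f a := by
  simp only [add_comm c, finsetSup_add]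

end Sup

variable {n : ℕ} (A : Fin n → Fin n → WithBot ℝ)

theorem add_le_mmul (B : Fin n → Fin n → WithBot ℝ) (i k j : Fin n) :
    A i k + B k j ≤ mmul A B i j :=
  le_sup (f := fun k => A i k + B k j) (mem_univ k)

theorem mpow_succ_apply (m : ℕ) (i j : Fin n) :
    mpow A (m + 1) i j = univ.sup fun k => mpow A m i k + A k j :=
  rfl

theorem mpow_one (i j : Fin n) : mpow A 1 i j = A i j := by
  rw [mpow_succ_apply]
  refine le_antisymm (Finset.sup_le fun k _ => ?_) ?_
  · by_cases h : i = k
    · subst h; simp [mpow]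
    · simp [mpow, h]
  · simpa [mpow] using le_sup (f := fun k => mpow A 0 i k + A k j) (mem_univ i)

theorem mpow_add_le (a b : ℕ) (i k j : Fin n) :
    mpow A a i k + mpow A b k j ≤ mpow A (a + b) i j := by
  induction b generalizing j with
  | zero =>
    by_cases h : k = j
    · subst h; simp [mpow]
    · simp [mpow, h]
  | succ b ih =>
    rw [mpow_succ_apply, add_finsetSup]
    refine Finset.sup_le fun l _ => ?_
    rw [← add_assoc]
    exact (add_le_add (ih l) le_rfl).trans (add_le_mmul _ A i l j)

theorem add_mpow_le_mpow_succ (m : ℕ) (i k j : Fin n) :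
    A i k + mpow A m k j ≤ mpow A (m + 1) i j := by
  simpa [mpow_one, add_comm 1 m] using mpow_add_le A 1 m i k j

theorem mpow_le_mstar_of_lt {m : ℕ} (hm : m < n) (i j : Fin n) : mpow A m i j ≤ mstar A i j :=
  le_sup (f := fun m => mpow A m i j) (mem_range.2 hm)

theorem zero_le_mstar_self (k : Fin n) : 0 ≤ mstar A k k := by
  simpa [mpow] using mpow_le_mstar_of_lt A k.pos k k

section Walk

/-- The weight of the walk `f 0, f 1, …, f m`. -/
noncomputable def walkWeight (f : ℕ → Fin n) (m : ℕ) : WithBot ℝ :=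
  ∑ t ∈ range m, A (f t) (f (t + 1))

theorem walkWeight_congr {f f' : ℕ → Fin n} {m : ℕ} (h : ∀ t ≤ m, f t = f' t) :
    walkWeight A f m = walkWeight A f' m :=
  sum_congr rfl fun t ht => by
    rw [mem_range] at ht
    rw [h t ht.le, h (t + 1) ht]

theorem walkWeight_add (f : ℕ → Fin n) (a b : ℕ) :
    walkWeight A f (a + b) = walkWeight A f a + walkWeight A (fun u => f (a + u)) b :=
  sum_range_add _ a b

theorem walkWeight_le_mpow (f : ℕ → Fin n) (m : ℕ) :
    walkWeight A f m ≤ mpow A m (f 0) (f m) := by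
  induction m with
  | zero => simp [walkWeight, mpow]
  | succ m ih =>
    rw [walkWeight, sum_range_succ]
    exact (add_le_add ih le_rfl).trans (add_le_mmul _ A _ (f m) _)

theorem exists_walk_of_mpow_ne_bot {m : ℕ} {i j : Fin n} (h : mpow A m i j ≠ ⊥) :
    ∃ f : ℕ → Fin n, f 0 = i ∧ f m = j ∧ mpow A m i j ≤ walkWeight A f m := by
  induction m generalizing j with
  | zero =>
    have hij : i = j := by
      by_contra hij
      simp [mpow, hij] at h
    exact ⟨fun _ => i, rfl, hij, by simp [mpow, walkWeight, hij]⟩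
  | succ m ih =>
    obtain ⟨k, -, hk⟩ := exists_mem_eq_sup univ ⟨i, mem_univ i⟩ fun k => mpow A m i k + A k j
    rw [← mpow_succ_apply] at hk
    obtain ⟨f, hf0, hfm, hf⟩ := ih (j := k) fun hb => h (by rw [hk, hb, WithBot.bot_add])
    refine ⟨Function.update f (m + 1) j, by simp [hf0], by simp, ?_⟩
    rw [walkWeight, sum_range_succ, ← walkWeight,
      walkWeight_congr A (f' := f) fun t ht => Function.update_of_ne (by omega) _ _,
      Function.update_of_ne (by omega), Function.update_self, hfm, hk]
    exact add_le_add hf le_rfl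

theorem exists_lt_le_map_eq (f : ℕ → Fin n) : ∃ s t, s < t ∧ t ≤ n ∧ f s = f t := by
  obtain ⟨a, b, hab, h⟩ :=
    Fintype.exists_ne_map_eq_of_card_lt (fun t : Fin (n + 1) => f t) (by simp)
  rcases lt_or_gt_of_ne (Fin.val_injective.ne hab) with hlt | hlt
  · exact ⟨a, b, hlt, Nat.lt_succ_iff.1 b.isLt, h⟩
  · exact ⟨b, a, hlt, Nat.lt_succ_iff.1 a.isLt, h.symm⟩

theorem walkWeight_le_mpow_of_cycle (f : ℕ → Fin n) {s c m : ℕ} (hm : s + c ≤ m)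
    (hcyc : f (s + c) = f s) (hc : mpow A c (f s) (f s) ≤ 0) :
    walkWeight A f m ≤ mpow A (m - c) (f 0) (f m) := by
  obtain ⟨r, rfl⟩ := Nat.exists_eq_add_of_le hm
  rw [walkWeight_add, walkWeight_add, show s + c + r - c = s + r by omega]
  calc walkWeight A f s + walkWeight A (fun u => f (s + u)) c +
        walkWeight A (fun u => f (s + c + u)) r
      ≤ mpow A s (f 0) (f s) + 0 + mpow A r (f s) (f (s + c + r)) := by
        gcongr
        · exact walkWeight_le_mpow A f s
        · exact (walkWeight_le_mpow A _ c).trans (by simpa [hcyc] using hc)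
        · simpa [hcyc] using walkWeight_le_mpow A (fun u => f (s + c + u)) r
    _ ≤ mpow A (s + r) (f 0) (f (s + c + r)) := by
        rw [add_zero]
        exact mpow_add_le A s r _ _ _

end Walk

theorem mpow_card_le_mstar (hTr : ∀ m ∈ Icc 1 n, ∀ i, mpow A m i i ≤ 0) (i j : Fin n) :
    mpow A n i j ≤ mstar A i j := by
  by_cases hb : mpow A n i j = ⊥
  · simp [hb]
  obtain ⟨f, rfl, rfl, hf⟩ := exists_walk_of_mpow_ne_bot A hb
  obtain ⟨s, t, hst, htn, hfst⟩ := exists_lt_le_map_eq f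
  have hcyc : f (s + (t - s)) = f s := by rw [Nat.add_sub_cancel' hst.le, hfst]
  calc mpow A n (f 0) (f n)
      ≤ walkWeight A f n := hf
    _ ≤ mpow A (n - (t - s)) (f 0) (f n) :=
        walkWeight_le_mpow_of_cycle A f (by omega) hcyc (hTr _ (mem_Icc.2 ⟨by omega, by omega⟩) _)
    _ ≤ mstar A (f 0) (f n) := mpow_le_mstar_of_lt A (by omega) _ _

theorem mpow_le_mstar (hTr : ∀ m ∈ Icc 1 n, ∀ i, mpow A m i i ≤ 0) {m : ℕ} (hm : m ≤ n)
    (i j : Fin n) : mpow A m i j ≤ mstar A i j := by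
  rcases hm.lt_or_eq with hm | rfl
  · exact mpow_le_mstar_of_lt A hm i j
  · exact mpow_card_le_mstar A hTr i j

theorem add_mstar_le_mstar (hTr : ∀ m ∈ Icc 1 n, ∀ i, mpow A m i i ≤ 0) (i k j : Fin n) :
    A i k + mstar A k j ≤ mstar A i j := by
  rw [mstar, add_finsetSup]
  refine Finset.sup_le fun m hm => ?_
  exact (add_mpow_le_mpow_succ A m i k j).trans
    (mpow_le_mstar A hTr (mem_range.1 hm) i j)

def IsSubeigenvector (x : Fin n → ℝ) : Prop :=
  ∀ i j, A i j + (x j : WithBot ℝ) ≤ x i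

theorem IsSubeigenvector.add_const {x : Fin n → ℝ} (hx : IsSubeigenvector A x) (c : ℝ) :
    IsSubeigenvector A fun k => x k + c := fun i j => by
  simpa only [WithBot.coe_add, ← add_assoc] using add_le_add (hx i j) le_rfl

theorem IsSubeigenvector.mpow_add_le {x : Fin n → ℝ} (hx : IsSubeigenvector A x) (m : ℕ)
    (i j : Fin n) : mpow A m i j + (x j : WithBot ℝ) ≤ x i := by
  induction m generalizing j with
  | zero =>
    by_cases h : i = j
    · subst h; simp [mpow]
    · simp [mpow, h]
  | succ m ih =>
    rw [mpow_succ_apply, finsetSup_add]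
    refine Finset.sup_le fun k _ => ?_
    rw [add_assoc]
    exact (add_le_add le_rfl (hx k j)).trans (ih k)

theorem IsSubeigenvector.mstar_add_le {x : Fin n → ℝ} (hx : IsSubeigenvector A x)
    (i j : Fin n) : mstar A i j + (x j : WithBot ℝ) ≤ x i := by
  rw [mstar, finsetSup_add]
  exact Finset.sup_le fun m _ => hx.mpow_add_le A m i j

theorem feasible_iff_isSubeigenvector_and_le (g : Fin n → WithBot ℝ) (x : Fin n → ℝ) :
    (∀ i, (univ.sup fun j => A i j + (x j : WithBot ℝ)) ⊔ g i ≤ x i) ↔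
      IsSubeigenvector A x ∧ ∀ i, g i ≤ x i := by
  simp only [IsSubeigenvector, sup_le_iff, Finset.sup_le_iff, mem_univ, true_implies, forall_and]

noncomputable def mnorm (B : Fin n → Fin n → WithBot ℝ) : WithBot ℝ :=
  univ.sup fun i => univ.sup fun j => B i j

theorem le_mnorm (B : Fin n → Fin n → WithBot ℝ) (i j : Fin n) : B i j ≤ mnorm B :=
  le_sup_of_le (mem_univ i) (le_sup (f := fun j => B i j) (mem_univ j))

theorem coe_add_coe_neg (a : ℝ) : (a : WithBot ℝ) + ((-a : ℝ) : WithBot ℝ) = 0 := by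
  rw [← WithBot.coe_add, add_neg_cancel, WithBot.coe_zero]

theorem makespan_add_const (C : Fin n → Fin n → WithBot ℝ) (x : Fin n → ℝ) (c : ℝ) :
    makespan C (fun k => x k + c) = makespan C x := by
  simp only [makespan, WithBot.coe_add, neg_add, ← add_assoc, ← finsetSup_add]
  rw [add_right_comm _ (c : WithBot ℝ), add_assoc, coe_add_coe_neg, add_zero]

theorem mnorm_mmul_mstar_le_makespan (C : Fin n → Fin n → WithBot ℝ) {x : Fin n → ℝ}
    (hx : IsSubeigenvector A x) : mnorm (mmul C (mstar A)) ≤ makespan C x := by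
  refine Finset.sup_le fun i _ => Finset.sup_le fun j _ => Finset.sup_le fun k _ => ?_
  calc C i k + mstar A k j
      = C i k + (mstar A k j + x j) + ((-x j : ℝ) : WithBot ℝ) := by
        rw [add_assoc, add_assoc, coe_add_coe_neg, add_zero]
    _ ≤ C i k + x k + ((-x j : ℝ) : WithBot ℝ) := by grw [hx.mstar_add_le A k j]
    _ ≤ makespan C x := add_le_add (le_mnorm (fun i j => C i j + (x j : WithBot ℝ)) i k)
        (le_sup (f := fun k => ((-x k : ℝ) : WithBot ℝ)) (mem_univ j))

/-- `x⁰ = A* ⊗ 0`. Each entry is at least `(A*)ₖₖ ≥ 0`, so `unbotD` never falls back to its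
default. -/
noncomputable def starRowMax (k : Fin n) : ℝ :=
  (univ.sup fun j => mstar A k j).unbotD 0

theorem coe_starRowMax (k : Fin n) :
    (starRowMax A k : WithBot ℝ) = univ.sup fun j => mstar A k j := by
  have h : (0 : WithBot ℝ) ≤ univ.sup fun j => mstar A k j :=
    (zero_le_mstar_self A k).trans (le_sup (f := fun j => mstar A k j) (mem_univ k))
  rw [starRowMax]
  generalize univ.sup (fun j => mstar A k j) = y at h ⊢
  induction y using WithBot.recBotCoe with
  | bot => simp at h
  | coe y => rfl

theorem starRowMax_nonneg (k : Fin n) : 0 ≤ starRowMax A k := by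
  have : (0 : WithBot ℝ) ≤ starRowMax A k := by
    rw [coe_starRowMax]
    exact (zero_le_mstar_self A k).trans (le_sup (f := fun j => mstar A k j) (mem_univ k))
  exact_mod_cast this

theorem isSubeigenvector_starRowMax (hTr : ∀ m ∈ Icc 1 n, ∀ i, mpow A m i i ≤ 0) :
    IsSubeigenvector A (starRowMax A) := fun i k => by
  rw [coe_starRowMax, coe_starRowMax, add_finsetSup]
  exact Finset.sup_le fun j _ =>
    (add_mstar_le_mstar A hTr i k j).trans (le_sup (f := fun j => mstar A i j) (mem_univ j))

theorem makespan_starRowMax_le (C : Fin n → Fin n → WithBot ℝ) :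
    makespan C (starRowMax A) ≤ mnorm (mmul C (mstar A)) := by
  have hfirst : (univ.sup fun i => univ.sup fun k => C i k + (starRowMax A k : WithBot ℝ)) ≤
      mnorm (mmul C (mstar A)) := by
    refine Finset.sup_le fun i _ => Finset.sup_le fun k _ => ?_
    rw [coe_starRowMax, add_finsetSup]
    exact Finset.sup_le fun j _ => (add_le_mmul C (mstar A) i k j).trans (le_mnorm _ i j)
  have hsecond : (univ.sup fun k => ((-starRowMax A k : ℝ) : WithBot ℝ)) ≤ 0 :=
    Finset.sup_le fun k _ => WithBot.coe_le_coe.2 (neg_nonpos.2 (starRowMax_nonneg A k))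
  simpa only [makespan, add_zero] using add_le_add hfirst hsecond

theorem exists_le_add_const (g : Fin n → WithBot ℝ) (x : Fin n → ℝ) :
    ∃ c : ℝ, ∀ i, g i ≤ ((x i + c : ℝ) : WithBot ℝ) := by
  obtain ⟨c, hc⟩ := Finite.exists_le fun i => (g i).unbotD 0 - x i
  refine ⟨c, fun i => (WithBot.le_coe_unbotD (g i) 0).trans (WithBot.coe_le_coe.2 ?_)⟩
  linarith [hc i]

end MaxPlus

open MaxPlus in
/-- Scheduling under finish-start (DCx ≤ x) and early-start (g ≤ x) constraints:
the minimum makespan equals θ = ‖C(DC)*‖ = max_{i,j,k}(C_{ik} + ((DC)*)_{kj}),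
and it is attained by some feasible x. -/
theorem stmt_12 {n : ℕ} (C D : Fin n → Fin n → WithBot ℝ) (g : Fin n → WithBot ℝ)
    (hTr : ∀ m ∈ Finset.Icc 1 n, ∀ i, mpow (mmul D C) m i i ≤ 0) :
    IsLeast
      {v | ∃ x : Fin n → ℝ,
        (∀ i, (Finset.univ.sup fun j => mmul D C i j + ((x j : ℝ) : WithBot ℝ)) ⊔ g i ≤
          ((x i : ℝ) : WithBot ℝ)) ∧
        makespan C x = v}
      (Finset.univ.sup fun i => Finset.univ.sup fun j => Finset.univ.sup fun k =>
        C i k + mstar (mmul D C) k j) := by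
  set A := mmul D C
  have hx₀ := isSubeigenvector_starRowMax A hTr
  refine ⟨?_, ?_⟩
  · obtain ⟨c, hc⟩ := exists_le_add_const g (starRowMax A)
    refine ⟨fun k => starRowMax A k + c,
      (feasible_iff_isSubeigenvector_and_le A g _).2 ⟨hx₀.add_const A c, hc⟩, ?_⟩
    rw [makespan_add_const]
    exact (makespan_starRowMax_le A C).antisymm (mnorm_mmul_mstar_le_makespan A C hx₀)
  · rintro _ ⟨x, hx, rfl⟩
    exact mnorm_mmul_mstar_le_makespan A C ((feasible_iff_isSubeigenvector_and_le A g x).1 hx).1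
end
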